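/- arXiv:1704.06859 — 11 statements merged into one kernel-verified Lean document; each statement's English description precedes it below -/
import Mathlib

section
/- For all real v, u > 0 and α a positive real number that is not a nonnegative integer, the series ∑_{l=0}^∞ (Γ(l-α)/Γ(l+1)) · (Γ(u+l+1)/Γ(v+u+l+1)) converges and equals Γ(u+1)Γ(v+α)Γ(-α) / (Γ(v)Γ(u+α+v+1)). -/
/-!
Since `Γ(l - α) / l! = Γ(-α) (-1)^l (α choose l)`, the binomial series gives
`∑ₗ Γ(l - α) / l! · xˡ = Γ(-α) (1 - x)^α` on `(0, 1)`. Multiplying by `x^u (1 - x)^(v - 1)` and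
integrating over `(0, 1)` term by term turns the left side into `∑ₗ Γ(l - α) / l! · B(u + l + 1, v)`
and the right side into `Γ(-α) B(u + 1, v + α)`; the Beta integrals are then evaluated by
`B(s, t) = Γ(s) Γ(t) / Γ(s + t)`. Termwise integration is legitimate because the coefficients are
positive once `l > α`, so all but finitely many terms are nonnegative functions.
-/

open Set MeasureTheory Filter Real
open scoped Nat

theorem Ring.choose_eq_prod_div_factorial {K : Type*} [Field K] [CharZero K] (a : K) (n : ℕ) :
    Ring.choose a n = (∏ j ∈ Finset.range n, (a - j)) / n ! := by
  rw [Ring.choose_eq_smul, ← descPochhammer_eval_eq_prod_range, ← Polynomial.aeval_eq_smeval,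
    Polynomial.aeval_def, ← Polynomial.eval_map, descPochhammer_map, smul_eq_mul, inv_mul_eq_div]

namespace Real

theorem hasSum_choose_mul_pow (a : ℝ) {x : ℝ} (hx : |x| < 1) :
    HasSum (fun n : ℕ => Ring.choose a n * x ^ n) ((1 + x) ^ a) := by
  have h := one_add_rpow_hasFPowerSeriesOnBall_zero (a := a) |>.hasSum
    (y := x) (by simpa [enorm_eq_nnnorm, ← NNReal.coe_lt_coe] using hx)
  simpa [binomialSeries, FormalMultilinearSeries.ofScalars] using h

theorem Gamma_add_nat_eq_prod_mul {s : ℝ} (hs : ∀ m : ℕ, s ≠ -m) (n : ℕ) :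
    Gamma (s + n) = (∏ j ∈ Finset.range n, (s + j)) * Gamma s := by
  induction n with
  | zero => simp
  | succ n ih =>
    have hsn : s + n ≠ 0 := fun h => hs n (eq_neg_of_add_eq_zero_left h)
    rw [Nat.cast_succ, ← add_assoc, Gamma_add_one hsn, ih, Finset.prod_range_succ]
    ring

theorem Gamma_nat_sub_div_Gamma_nat_add_one {α : ℝ} (hα : ∀ n : ℕ, α ≠ n) (l : ℕ) :
    Gamma (l - α) / Gamma (l + 1) = Gamma (-α) * ((-1) ^ l * Ring.choose α l) := by
  have hs : ∀ m : ℕ, -α ≠ -m := fun m h => hα m (neg_inj.1 h)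
  have hprod : ∏ j ∈ Finset.range l, (-α + j) = (-1) ^ l * ∏ j ∈ Finset.range l, (α - j) := by
    rw [show (-1 : ℝ) ^ l = ∏ _j ∈ Finset.range l, (-1) by simp, ← Finset.prod_mul_distrib]
    exact Finset.prod_congr rfl fun j _ => by ring
  rw [sub_eq_neg_add, Gamma_add_nat_eq_prod_mul hs, Gamma_nat_eq_factorial,
    Ring.choose_eq_prod_div_factorial, hprod]
  ring

theorem eventually_nonneg_Gamma_nat_sub_div (α : ℝ) :
    ∀ᶠ l : ℕ in atTop, 0 ≤ Gamma (l - α) / Gamma (l + 1) := by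
  filter_upwards [eventually_gt_atTop ⌊α⌋₊] with l hl
  exact div_nonneg (Gamma_pos_of_pos (sub_pos.2 (Nat.lt_of_floor_lt hl))).le
    (Gamma_pos_of_pos (by positivity)).le

theorem hasSum_Gamma_nat_sub_div_mul_pow {α : ℝ} (hα : ∀ n : ℕ, α ≠ n) {x : ℝ}
    (hx : |x| < 1) :
    HasSum (fun l : ℕ => Gamma (l - α) / Gamma (l + 1) * x ^ l) (Gamma (-α) * (1 - x) ^ α) := by
  have h := (hasSum_choose_mul_pow α (x := -x) (by rwa [abs_neg])).mul_left (Gamma (-α))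
  rw [← sub_eq_add_neg] at h
  refine h.congr_fun fun l => ?_
  rw [Gamma_nat_sub_div_Gamma_nat_add_one hα, neg_pow]
  ring

theorem hasSum_Gamma_nat_sub_div_mul_betaIntegrand {α : ℝ} (hα : ∀ n : ℕ, α ≠ n) (u v : ℝ)
    {x : ℝ} (hx : x ∈ Ioo 0 1) :
    HasSum
      (fun l : ℕ => Gamma (l - α) / Gamma (l + 1) * (x ^ (u + l + 1 - 1) * (1 - x) ^ (v - 1)))
      (Gamma (-α) * (x ^ (u + 1 - 1) * (1 - x) ^ (v + α - 1))) := by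
  have h := (hasSum_Gamma_nat_sub_div_mul_pow hα (abs_lt.2 ⟨by linarith [hx.1], hx.2⟩)).mul_right
    (x ^ u * (1 - x) ^ (v - 1))
  have hsum : Gamma (-α) * (1 - x) ^ α * (x ^ u * (1 - x) ^ (v - 1))
      = Gamma (-α) * (x ^ (u + 1 - 1) * (1 - x) ^ (v + α - 1)) := by
    rw [add_sub_cancel_right, add_sub_right_comm, rpow_add (sub_pos.2 hx.2)]
    ring
  rw [hsum] at h
  refine h.congr_fun fun l => ?_
  rw [add_sub_cancel_right, rpow_add hx.1, rpow_natCast]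
  ring

theorem ofReal_rpow_mul_one_sub_rpow {s t x : ℝ} (hx : x ∈ Icc 0 1) :
    ((x ^ (s - 1) * (1 - x) ^ (t - 1) : ℝ) : ℂ)
      = (x : ℂ) ^ ((s : ℂ) - 1) * (1 - (x : ℂ)) ^ ((t : ℂ) - 1) := by
  rw [Complex.ofReal_mul, Complex.ofReal_cpow hx.1, Complex.ofReal_cpow (sub_nonneg.2 hx.2)]
  push_cast
  rfl

theorem integrableOn_rpow_mul_one_sub_rpow {s t : ℝ} (hs : 0 < s) (ht : 0 < t) :
    IntegrableOn (fun x : ℝ => x ^ (s - 1) * (1 - x) ^ (t - 1)) (Ioo 0 1) := by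
  have h := Complex.betaIntegral_convergent (u := s) (v := t) (by simpa) (by simpa)
  rw [intervalIntegrable_iff_integrableOn_Ioc_of_le zero_le_one] at h
  refine IntegrableOn.congr_fun (h.mono_set Ioo_subset_Ioc_self).re (fun x hx => ?_)
    measurableSet_Ioo
  rw [← ofReal_rpow_mul_one_sub_rpow (Ioo_subset_Icc_self hx)]
  exact Complex.ofReal_re _

theorem integral_rpow_mul_one_sub_rpow {s t : ℝ} (hs : 0 < s) (ht : 0 < t) :
    ∫ x in Ioo 0 1, x ^ (s - 1) * (1 - x) ^ (t - 1) = Gamma s * Gamma t / Gamma (s + t) := by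
  have h := Complex.betaIntegral_eq_Gamma_mul_div s t (by simpa) (by simpa)
  rw [Complex.betaIntegral, ← intervalIntegral.integral_congr
      (fun x hx => ofReal_rpow_mul_one_sub_rpow (by rwa [uIcc_of_le zero_le_one] at hx)),
    intervalIntegral.integral_ofReal, intervalIntegral.integral_of_le zero_le_one,
    integral_Ioc_eq_integral_Ioo, ← Complex.ofReal_add, Complex.Gamma_ofReal,
    Complex.Gamma_ofReal, Complex.Gamma_ofReal] at h
  exact_mod_cast h

end Real

namespace MeasureTheory

variable {α : Type*} [MeasurableSpace α] {μ : Measure α}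

theorem hasSum_integral_of_nonneg {ι : Type*} [Countable ι] {F : ι → α → ℝ} {f : α → ℝ}
    (hF_meas : ∀ n, AEStronglyMeasurable (F n) μ) (hF_nonneg : ∀ n, 0 ≤ᵐ[μ] F n)
    (hf : Integrable f μ) (h_lim : ∀ᵐ a ∂μ, HasSum (fun n => F n a) (f a)) :
    HasSum (fun n => ∫ a, F n a ∂μ) (∫ a, f a ∂μ) :=
  hasSum_integral_of_dominated_convergence F hF_meas
    (fun n => (hF_nonneg n).mono fun _ ha => (Real.norm_of_nonneg ha).le)
    (h_lim.mono fun _ ha => ha.summable)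
    (hf.congr (h_lim.mono fun _ ha => ha.tsum_eq.symm)) h_lim

theorem hasSum_integral_of_eventually_nonneg {F : ℕ → α → ℝ} {f : α → ℝ}
    (hF_int : ∀ n, Integrable (F n) μ) (hF_nonneg : ∀ᶠ n in atTop, 0 ≤ᵐ[μ] F n)
    (hf : Integrable f μ) (h_lim : ∀ᵐ a ∂μ, HasSum (fun n => F n a) (f a)) :
    HasSum (fun n => ∫ a, F n a ∂μ) (∫ a, f a ∂μ) := by
  obtain ⟨N, hN⟩ := eventually_atTop.1 hF_nonneg
  have hhead : Integrable (fun a => ∑ i ∈ Finset.range N, F i a) μ :=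
    integrable_finsetSum _ fun i _ => hF_int i
  have htail := hasSum_integral_of_nonneg (f := fun a => f a - ∑ i ∈ Finset.range N, F i a)
    (fun n => (hF_int (n + N)).1) (fun n => hN (n + N) (Nat.le_add_left N n)) (hf.sub hhead)
    (h_lim.mono fun _ ha => (hasSum_nat_add_iff' N).2 (by simpa using ha))
  rw [integral_sub hf hhead, integral_finsetSum _ fun i _ => hF_int i] at htail
  exact (hasSum_nat_add_iff' N).1 htail

end MeasureTheory

/-- Lemma 1.1: sum of quotients of Gamma functions. -/
theorem stmt0 (v u α : ℝ) (hv : 0 < v) (hu : 0 < u) (hα : 0 < α)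
    (hαn : ∀ n : ℕ, α ≠ n) :
    HasSum (fun l : ℕ =>
      Real.Gamma (l - α) / Real.Gamma (l + 1) *
        (Real.Gamma (u + l + 1) / Real.Gamma (v + u + l + 1)))
      (Real.Gamma (u + 1) * Real.Gamma (v + α) * Real.Gamma (-α) /
        (Real.Gamma v * Real.Gamma (u + α + v + 1))) := by
  have hnonneg : ∀ᶠ l : ℕ in atTop, 0 ≤ᵐ[volume.restrict (Ioo 0 1)] fun x =>
      Gamma (l - α) / Gamma (l + 1) * (x ^ (u + l + 1 - 1) * (1 - x) ^ (v - 1)) := by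
    filter_upwards [eventually_nonneg_Gamma_nat_sub_div α] with l hl
    filter_upwards [ae_restrict_mem measurableSet_Ioo] with x hx
    exact mul_nonneg hl (mul_nonneg (rpow_nonneg hx.1.le _) (rpow_nonneg (sub_nonneg.2 hx.2.le) _))
  have hsum := hasSum_integral_of_eventually_nonneg
    (fun l => (integrableOn_rpow_mul_one_sub_rpow (s := u + l + 1) (by positivity) hv).const_mul _)
    hnonneg
    ((integrableOn_rpow_mul_one_sub_rpow (s := u + 1) (by positivity) (by positivity)).const_mul _)
    ((ae_restrict_mem measurableSet_Ioo).mono fun x hx =>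
      hasSum_Gamma_nat_sub_div_mul_betaIntegrand hαn u v hx)
  have hterm (l : ℕ) : ∫ x in Ioo 0 1, x ^ (u + l + 1 - 1) * (1 - x) ^ (v - 1)
      = Gamma (u + l + 1) * Gamma v / Gamma (v + u + l + 1) := by
    rw [integral_rpow_mul_one_sub_rpow (by positivity) hv, add_comm _ v, ← add_assoc, ← add_assoc]
  simp only [integral_const_mul, hterm,
    integral_rpow_mul_one_sub_rpow (s := u + 1) (t := v + α) (by positivity) (by positivity)]
    at hsum
  have hΓv : Gamma v ≠ 0 := (Gamma_pos_of_pos hv).ne'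
  have hval : Gamma (-α) * (Gamma (u + 1) * Gamma (v + α) / Gamma (u + 1 + (v + α))) / Gamma v
      = Gamma (u + 1) * Gamma (v + α) * Gamma (-α) / (Gamma v * Gamma (u + α + v + 1)) := by
    rw [show u + 1 + (v + α) = u + α + v + 1 by ring]
    field_simp
  rw [← hval]
  exact (hsum.div_const (Gamma v)).congr_fun fun l => by field_simp
end

section
/- For all real v, r > 0, α a positive real not a nonnegative integer, and m a nonnegative integer, ∑_{l=0}^m (αr + l(v+α)) · (Γ(l-α)/Γ(l+1)) · (Γ(l+r)/Γ(v+1+l+r)) = -(Γ(m+1+r)/Γ(m+1)) · (Γ(m+1-α)/Γ(v+m+r+1)). -/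
/-!
The sum telescopes: its `l`-th term is `F l - F (l + 1)` for
`F x = Γ(x + r) / Γ(x) · Γ(x - α) / Γ(v + x + r)`, as the functional equation `Γ(s + 1) = s Γ(s)`
shows, and `F 0 = 0` because `1 / Γ` vanishes at `0`.
-/

open Real

noncomputable def gammaAntidiff (v r α x : ℝ) : ℝ :=
  Gamma (x + r) / Gamma x * (Gamma (x - α) / Gamma (v + x + r))

section

variable {v r α : ℝ}

theorem gammaAntidiff_zero : gammaAntidiff v r α 0 = 0 := by
  simp [gammaAntidiff, Gamma_zero]

theorem gammaAntidiff_sub_succ_of_pos {x : ℝ} (hx : 0 < x) (hxα : x ≠ α) (hxr : x + r ≠ 0)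
    (hvxr : 0 < v + x + r) :
    gammaAntidiff v r α x - gammaAntidiff v r α (x + 1) =
      (α * r + x * (v + α)) * (Gamma (x - α) / Gamma (x + 1)) *
        (Gamma (x + r) / Gamma (v + 1 + x + r)) := by
  have hΓx := (Gamma_pos_of_pos hx).ne'
  have hΓvxr := (Gamma_pos_of_pos hvxr).ne'
  simp only [gammaAntidiff]
  rw [Gamma_add_one hx.ne', show v + 1 + x + r = v + x + r + 1 by ring,
    show v + (x + 1) + r = v + x + r + 1 by ring, Gamma_add_one hvxr.ne',
    show x + 1 + r = x + r + 1 by ring, Gamma_add_one hxr,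
    show x + 1 - α = x - α + 1 by ring, Gamma_add_one (sub_ne_zero.mpr hxα)]
  field_simp
  ring

theorem gammaAntidiff_one (hα : α ≠ 0) (hr : r ≠ 0) (hvr : 0 < v + r) :
    -gammaAntidiff v r α 1 = α * r * Gamma (-α) * (Gamma r / Gamma (v + 1 + r)) := by
  have hΓvr := (Gamma_pos_of_pos hvr).ne'
  rw [gammaAntidiff, show v + 1 + r = v + r + 1 by ring, Gamma_add_one hvr.ne', Gamma_one,
    add_comm 1 r, Gamma_add_one hr, sub_eq_neg_add, Gamma_add_one (neg_ne_zero.mpr hα)]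
  field_simp

theorem gammaAntidiff_sub_succ_natCast (hv : 0 < v) (hr : 0 < r) (hαn : ∀ n : ℕ, α ≠ n) (l : ℕ) :
    gammaAntidiff v r α l - gammaAntidiff v r α (l + 1) =
      (α * r + l * (v + α)) * (Gamma (l - α) / Gamma (l + 1)) *
        (Gamma (l + r) / Gamma (v + 1 + l + r)) := by
  rcases l.eq_zero_or_pos with rfl | hl
  · simpa [gammaAntidiff_zero] using
      gammaAntidiff_one (by exact_mod_cast hαn 0) hr.ne' (by positivity)
  · have hl : (0 : ℝ) < l := by exact_mod_cast hl
    exact gammaAntidiff_sub_succ_of_pos hl (hαn l).symm (by positivity) (by positivity)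

end

theorem stmt1_general (v r α : ℝ) (hv : 0 < v) (hr : 0 < r)
    (hαn : ∀ n : ℕ, α ≠ n) (m : ℕ) :
    ∑ l ∈ Finset.range (m + 1),
      (α * r + l * (v + α)) * (Real.Gamma (l - α) / Real.Gamma (l + 1)) *
        (Real.Gamma (l + r) / Real.Gamma (v + 1 + l + r))
    = -(Real.Gamma (m + 1 + r) / Real.Gamma (m + 1)) *
        (Real.Gamma (m + 1 - α) / Real.Gamma (v + m + r + 1)) := by
  have htelescope := Finset.sum_range_sub' (gammaAntidiff v r α ·) (m + 1)
  simp only [Nat.cast_zero, gammaAntidiff_zero, zero_sub, Nat.cast_add, Nat.cast_one]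
    at htelescope
  rw [Finset.sum_congr rfl fun l _ => (gammaAntidiff_sub_succ_natCast hv hr hαn l).symm,
    htelescope, gammaAntidiff, show v + (m + 1) + r = v + m + r + 1 by ring]
  ring

/-- Lemma 1.2: finite sum identity for Gamma quotients. -/
theorem stmt1 (v r α : ℝ) (hv : 0 < v) (hr : 0 < r) (hα : 0 < α)
    (hαn : ∀ n : ℕ, α ≠ n) (m : ℕ) :
    ∑ l ∈ Finset.range (m + 1),
      (α * r + l * (v + α)) * (Real.Gamma (l - α) / Real.Gamma (l + 1)) *
        (Real.Gamma (l + r) / Real.Gamma (v + 1 + l + r))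
    = -(Real.Gamma (m + 1 + r) / Real.Gamma (m + 1)) *
        (Real.Gamma (m + 1 - α) / Real.Gamma (v + m + r + 1)) :=
  stmt1_general v r α hv hr hαn m
end

section
/- For all real v, r > 0, α a positive real not a nonnegative integer, and m a nonnegative integer, the identity (Γ(m+r+1)/Γ(v+m+r)) · ∑_{l=0}^m (Γ(l-α)/Γ(l+1)) · (Γ(v+α+r+m-l)/Γ(r+1+m-l)) = (Γ(α+r+v)/Γ(r)) · ∑_{l=0}^m (Γ(l-α)/Γ(l+1)) · (Γ(l+r)/Γ(v+l+r)) holds. -/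
/-- Per-term telescoping certificate identity (Gosper/Zeilberger certificate). -/
lemma term_step (v r α : ℝ) (hv : 0 < v) (hr : 0 < r) (hα : 0 < α)
    (hαn : ∀ n : ℕ, α ≠ n) (m l : ℕ) (hl : l ≤ m) :
    Real.Gamma (((m+1 : ℕ) : ℝ) + r + 1) / Real.Gamma (v + ((m+1 : ℕ) : ℝ) + r) *
        (Real.Gamma ((l : ℝ) - α) / Real.Gamma ((l : ℝ) + 1) *
          (Real.Gamma (v + α + r + ((m+1 : ℕ) : ℝ) - (l : ℝ)) /
            Real.Gamma (r + 1 + ((m+1 : ℕ) : ℝ) - (l : ℝ))))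
      - Real.Gamma ((m : ℝ) + r + 1) / Real.Gamma (v + (m : ℝ) + r) *
        (Real.Gamma ((l : ℝ) - α) / Real.Gamma ((l : ℝ) + 1) *
          (Real.Gamma (v + α + r + (m : ℝ) - (l : ℝ)) /
            Real.Gamma (r + 1 + (m : ℝ) - (l : ℝ))))
    = (-(((l+1 : ℕ) : ℝ)) * (Real.Gamma ((m : ℝ) + r + 1) / Real.Gamma (v + (m : ℝ) + r)) *
        (Real.Gamma (((l+1 : ℕ) : ℝ) - α) / Real.Gamma (((l+1 : ℕ) : ℝ) + 1)) *
        (Real.Gamma (v + α + r + (m : ℝ) + 1 - ((l+1 : ℕ) : ℝ)) /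
          ((v + (m : ℝ) + r) * Real.Gamma (r + 2 + (m : ℝ) - ((l+1 : ℕ) : ℝ)))))
      - (-((l : ℝ)) * (Real.Gamma ((m : ℝ) + r + 1) / Real.Gamma (v + (m : ℝ) + r)) *
        (Real.Gamma ((l : ℝ) - α) / Real.Gamma ((l : ℝ) + 1)) *
        (Real.Gamma (v + α + r + (m : ℝ) + 1 - (l : ℝ)) /
          ((v + (m : ℝ) + r) * Real.Gamma (r + 2 + (m : ℝ) - (l : ℝ))))) := by
  have hlR : (l : ℝ) ≤ (m : ℝ) := Nat.cast_le.mpr hl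
  have hm0 : (0:ℝ) ≤ (m : ℝ) := Nat.cast_nonneg m
  have hl0 : (0:ℝ) ≤ (l : ℝ) := Nat.cast_nonneg l
  have hx1 : (0:ℝ) < (m : ℝ) + r + 1 := by linarith
  have hx2 : (0:ℝ) < v + (m : ℝ) + r := by linarith
  have hx3 : (0:ℝ) < v + α + r + (m : ℝ) - (l : ℝ) := by linarith
  have hx4 : (0:ℝ) < r + 1 + (m : ℝ) - (l : ℝ) := by linarith
  have hx5 : (0:ℝ) < (l : ℝ) + 1 := by linarith
  have hlα : (l : ℝ) - α ≠ 0 := sub_ne_zero.mpr (Ne.symm (hαn l))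
  have e1 : Real.Gamma (((m+1 : ℕ) : ℝ) + r + 1)
      = ((m : ℝ) + r + 1) * Real.Gamma ((m : ℝ) + r + 1) := by
    rw [show (((m+1 : ℕ) : ℝ) + r + 1) = ((m : ℝ) + r + 1) + 1 by push_cast; ring,
      Real.Gamma_add_one hx1.ne']
  have e2 : Real.Gamma (v + ((m+1 : ℕ) : ℝ) + r)
      = (v + (m : ℝ) + r) * Real.Gamma (v + (m : ℝ) + r) := by
    rw [show (v + ((m+1 : ℕ) : ℝ) + r) = (v + (m : ℝ) + r) + 1 by push_cast; ring,
      Real.Gamma_add_one hx2.ne']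
  have e3 : Real.Gamma (v + α + r + ((m+1 : ℕ) : ℝ) - (l : ℝ))
      = (v + α + r + (m : ℝ) - (l : ℝ)) * Real.Gamma (v + α + r + (m : ℝ) - (l : ℝ)) := by
    rw [show (v + α + r + ((m+1 : ℕ) : ℝ) - (l : ℝ)) = (v + α + r + (m : ℝ) - (l : ℝ)) + 1
        by push_cast; ring, Real.Gamma_add_one hx3.ne']
  have e4 : Real.Gamma (r + 1 + ((m+1 : ℕ) : ℝ) - (l : ℝ))
      = (r + 1 + (m : ℝ) - (l : ℝ)) * Real.Gamma (r + 1 + (m : ℝ) - (l : ℝ)) := by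
    rw [show (r + 1 + ((m+1 : ℕ) : ℝ) - (l : ℝ)) = (r + 1 + (m : ℝ) - (l : ℝ)) + 1
        by push_cast; ring, Real.Gamma_add_one hx4.ne']
  have e5 : Real.Gamma (((l+1 : ℕ) : ℝ) - α) = ((l : ℝ) - α) * Real.Gamma ((l : ℝ) - α) := by
    rw [show (((l+1 : ℕ) : ℝ) - α) = ((l : ℝ) - α) + 1 by push_cast; ring,
      Real.Gamma_add_one hlα]
  have e6 : Real.Gamma (((l+1 : ℕ) : ℝ) + 1) = ((l : ℝ) + 1) * Real.Gamma ((l : ℝ) + 1) := by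
    rw [show (((l+1 : ℕ) : ℝ) + 1) = ((l : ℝ) + 1) + 1 by push_cast; ring,
      Real.Gamma_add_one hx5.ne']
  have e7 : Real.Gamma (v + α + r + (m : ℝ) + 1 - ((l+1 : ℕ) : ℝ))
      = Real.Gamma (v + α + r + (m : ℝ) - (l : ℝ)) := by
    congr 1; push_cast; ring
  have e8 : Real.Gamma (r + 2 + (m : ℝ) - ((l+1 : ℕ) : ℝ))
      = Real.Gamma (r + 1 + (m : ℝ) - (l : ℝ)) := by
    congr 1; push_cast; ring
  have e9 : Real.Gamma (v + α + r + (m : ℝ) + 1 - (l : ℝ))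
      = (v + α + r + (m : ℝ) - (l : ℝ)) * Real.Gamma (v + α + r + (m : ℝ) - (l : ℝ)) := by
    rw [show (v + α + r + (m : ℝ) + 1 - (l : ℝ)) = (v + α + r + (m : ℝ) - (l : ℝ)) + 1
        by ring, Real.Gamma_add_one hx3.ne']
  have e10 : Real.Gamma (r + 2 + (m : ℝ) - (l : ℝ))
      = (r + 1 + (m : ℝ) - (l : ℝ)) * Real.Gamma (r + 1 + (m : ℝ) - (l : ℝ)) := by
    rw [show (r + 2 + (m : ℝ) - (l : ℝ)) = (r + 1 + (m : ℝ) - (l : ℝ)) + 1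
        by ring, Real.Gamma_add_one hx4.ne']
  have g2 : Real.Gamma (v + (m : ℝ) + r) ≠ 0 := (Real.Gamma_pos_of_pos hx2).ne'
  have g4 : Real.Gamma ((l : ℝ) + 1) ≠ 0 := (Real.Gamma_pos_of_pos hx5).ne'
  have g6 : Real.Gamma (r + 1 + (m : ℝ) - (l : ℝ)) ≠ 0 := (Real.Gamma_pos_of_pos hx4).ne'
  rw [e1, e2, e3, e4, e5, e6, e7, e8, e9, e10]
  push_cast
  field_simp
  ring

/-- Theorem 1.3: key identity of sums of quotients of Gamma functions. -/
theorem stmt2 (v r α : ℝ) (hv : 0 < v) (hr : 0 < r) (hα : 0 < α)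
    (hαn : ∀ n : ℕ, α ≠ n) (m : ℕ) :
    (Real.Gamma (m + r + 1) / Real.Gamma (v + m + r)) *
      ∑ l ∈ Finset.range (m + 1),
        (Real.Gamma (l - α) / Real.Gamma (l + 1)) *
          (Real.Gamma (v + α + r + m - l) / Real.Gamma (r + 1 + m - l))
    = (Real.Gamma (α + r + v) / Real.Gamma r) *
      ∑ l ∈ Finset.range (m + 1),
        (Real.Gamma (l - α) / Real.Gamma (l + 1)) *
          (Real.Gamma (l + r) / Real.Gamma (v + l + r)) := by
  induction m with
  | zero =>
      have hr1 : Real.Gamma (r + 1) = r * Real.Gamma r := Real.Gamma_add_one hr.ne'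
      have hΓr : Real.Gamma r ≠ 0 := (Real.Gamma_pos_of_pos hr).ne'
      have hΓvr : Real.Gamma (v + r) ≠ 0 :=
        (Real.Gamma_pos_of_pos (by linarith : (0:ℝ) < v + r)).ne'
      simp only [zero_add, Finset.sum_range_one, Nat.cast_zero, add_zero, sub_zero,
        zero_sub, Real.Gamma_one]
      rw [show v + α + r = α + r + v by ring, hr1]
      field_simp
  | succ m ih =>
      set GG : ℕ → ℝ := fun k =>
        -((k : ℝ)) * (Real.Gamma ((m : ℝ) + r + 1) / Real.Gamma (v + (m : ℝ) + r)) *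
          (Real.Gamma ((k : ℝ) - α) / Real.Gamma ((k : ℝ) + 1)) *
          (Real.Gamma (v + α + r + (m : ℝ) + 1 - (k : ℝ)) /
            ((v + (m : ℝ) + r) * Real.Gamma (r + 2 + (m : ℝ) - (k : ℝ)))) with hGG
      have hGG0 : GG 0 = 0 := by simp [hGG]
      conv_lhs => rw [Finset.sum_range_succ]
      conv_rhs => rw [Finset.sum_range_succ]
      rw [mul_add, mul_add, ← ih]
      have sum_eq :
          Real.Gamma (((m+1 : ℕ) : ℝ) + r + 1) / Real.Gamma (v + ((m+1 : ℕ) : ℝ) + r) *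
            ∑ l ∈ Finset.range (m + 1),
              (Real.Gamma ((l : ℝ) - α) / Real.Gamma ((l : ℝ) + 1)) *
                (Real.Gamma (v + α + r + ((m+1 : ℕ) : ℝ) - (l : ℝ)) /
                  Real.Gamma (r + 1 + ((m+1 : ℕ) : ℝ) - (l : ℝ)))
          = Real.Gamma ((m : ℝ) + r + 1) / Real.Gamma (v + (m : ℝ) + r) *
            ∑ l ∈ Finset.range (m + 1),
              (Real.Gamma ((l : ℝ) - α) / Real.Gamma ((l : ℝ) + 1)) *
                (Real.Gamma (v + α + r + (m : ℝ) - (l : ℝ)) /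
                  Real.Gamma (r + 1 + (m : ℝ) - (l : ℝ)))
            + GG (m + 1) := by
        have h2 :
            (∑ l ∈ Finset.range (m + 1),
              Real.Gamma (((m+1 : ℕ) : ℝ) + r + 1) / Real.Gamma (v + ((m+1 : ℕ) : ℝ) + r) *
                ((Real.Gamma ((l : ℝ) - α) / Real.Gamma ((l : ℝ) + 1)) *
                  (Real.Gamma (v + α + r + ((m+1 : ℕ) : ℝ) - (l : ℝ)) /
                    Real.Gamma (r + 1 + ((m+1 : ℕ) : ℝ) - (l : ℝ)))))
            - (∑ l ∈ Finset.range (m + 1),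
              Real.Gamma ((m : ℝ) + r + 1) / Real.Gamma (v + (m : ℝ) + r) *
                ((Real.Gamma ((l : ℝ) - α) / Real.Gamma ((l : ℝ) + 1)) *
                  (Real.Gamma (v + α + r + (m : ℝ) - (l : ℝ)) /
                    Real.Gamma (r + 1 + (m : ℝ) - (l : ℝ)))))
            = GG (m + 1) - GG 0 := by
          rw [← Finset.sum_sub_distrib, ← Finset.sum_range_sub GG (m + 1)]
          refine Finset.sum_congr rfl fun l hlmem => ?_
          have hl : l ≤ m := Nat.lt_succ_iff.mp (Finset.mem_range.mp hlmem)
          have h3 := term_step v r α hv hr hα hαn m l hl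
          simp only [hGG]
          push_cast at h3 ⊢
          linear_combination h3
        rw [hGG0, sub_zero] at h2
        rw [Finset.mul_sum, Finset.mul_sum]
        linarith [h2]
      rw [sum_eq]
      have hx2 : (0:ℝ) < v + (m : ℝ) + r := by positivity
      have hvar : (0:ℝ) < v + α + r := by linarith
      have hm1 : (0:ℝ) < ((m+1 : ℕ) : ℝ) + 1 := by positivity
      have bd : GG (m + 1)
          + Real.Gamma (((m+1 : ℕ) : ℝ) + r + 1) / Real.Gamma (v + ((m+1 : ℕ) : ℝ) + r) *
            ((Real.Gamma (((m+1 : ℕ) : ℝ) - α) / Real.Gamma (((m+1 : ℕ) : ℝ) + 1)) *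
              (Real.Gamma (v + α + r + ((m+1 : ℕ) : ℝ) - ((m+1 : ℕ) : ℝ)) /
                Real.Gamma (r + 1 + ((m+1 : ℕ) : ℝ) - ((m+1 : ℕ) : ℝ))))
          = Real.Gamma (α + r + v) / Real.Gamma r *
            ((Real.Gamma (((m+1 : ℕ) : ℝ) - α) / Real.Gamma (((m+1 : ℕ) : ℝ) + 1)) *
              (Real.Gamma (((m+1 : ℕ) : ℝ) + r) / Real.Gamma (v + ((m+1 : ℕ) : ℝ) + r))) := by
        have f1 : Real.Gamma (((m+1 : ℕ) : ℝ) + r + 1)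
            = ((m : ℝ) + r + 1) * Real.Gamma ((m : ℝ) + r + 1) := by
          rw [show (((m+1 : ℕ) : ℝ) + r + 1) = ((m : ℝ) + r + 1) + 1 by push_cast; ring,
            Real.Gamma_add_one (by positivity : ((m : ℝ) + r + 1) ≠ 0)]
        have f2 : Real.Gamma (v + ((m+1 : ℕ) : ℝ) + r)
            = (v + (m : ℝ) + r) * Real.Gamma (v + (m : ℝ) + r) := by
          rw [show (v + ((m+1 : ℕ) : ℝ) + r) = (v + (m : ℝ) + r) + 1 by push_cast; ring,
            Real.Gamma_add_one hx2.ne']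
        have f3 : Real.Gamma (v + α + r + ((m+1 : ℕ) : ℝ) - ((m+1 : ℕ) : ℝ))
            = Real.Gamma (α + r + v) := by congr 1; ring
        have f4 : Real.Gamma (r + 1 + ((m+1 : ℕ) : ℝ) - ((m+1 : ℕ) : ℝ))
            = r * Real.Gamma r := by
          rw [show (r + 1 + ((m+1 : ℕ) : ℝ) - ((m+1 : ℕ) : ℝ)) = r + 1 by ring,
            Real.Gamma_add_one hr.ne']
        have f5 : Real.Gamma (v + α + r + (m : ℝ) + 1 - ((m+1 : ℕ) : ℝ))
            = Real.Gamma (α + r + v) := by congr 1; push_cast; ring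
        have f6 : Real.Gamma (r + 2 + (m : ℝ) - ((m+1 : ℕ) : ℝ)) = r * Real.Gamma r := by
          rw [show (r + 2 + (m : ℝ) - ((m+1 : ℕ) : ℝ)) = r + 1 by push_cast; ring,
            Real.Gamma_add_one hr.ne']
        have f7 : Real.Gamma (((m+1 : ℕ) : ℝ) + r)
            = Real.Gamma ((m : ℝ) + r + 1) := by congr 1; push_cast; ring
        have g2 : Real.Gamma (v + (m : ℝ) + r) ≠ 0 := (Real.Gamma_pos_of_pos hx2).ne'
        have gΓr : Real.Gamma r ≠ 0 := (Real.Gamma_pos_of_pos hr).ne'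
        have gm1 : Real.Gamma (((m+1 : ℕ) : ℝ) + 1) ≠ 0 := (Real.Gamma_pos_of_pos hm1).ne'
        simp only [hGG]
        rw [f1, f2, f5, f6, f3, f4, f7]
        push_cast
        field_simp
        ring
      push_cast at bd ⊢
      linarith
end

section
/- Let α > 0 and q > 1, and let k^α(n) = Γ(n+α)/(Γ(α)Γ(n+1)). There exists a constant C depending only on α and q such that for all integers j > n ≥ 0, ∑_{l=n+1}^∞ (k^α(l-n+j)/k^{α+1}(l))^q ≤ C · j · (k^α(j)/k^{α+1}(n))^q. -/
/-!
Writing `g m = k^α(j+m) / k^{α+1}(n+m)`, the recursions `k^α(a+1) (a+1) = k^α(a) (a+α)` give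
`(j+m+1) g(m+1) / ((j+m) g m) = (j+m+α)(n+m+1) / ((j+m)(n+m+1+α))`, which is at most `1`
exactly because `n < j`. Hence `g m ≤ j g 0 / (j+m)`, and the claim follows with
`C = 1/(q-1)` from `∑_{m ≥ 1} (j+m)^{-q} ≤ j^{1-q} / (q-1)`.
-/

/-- The Cesàro kernel of real order. -/
noncomputable def cesK (α : ℝ) (n : ℕ) : ℝ :=
  Real.Gamma (n + α) / (Real.Gamma α * Real.Gamma (n + 1))

open Real Finset

lemma cesK_pos {α : ℝ} (hα : 0 < α) (n : ℕ) : 0 < cesK α n := by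
  unfold cesK
  have := Gamma_pos_of_pos hα
  have := Gamma_pos_of_pos (by positivity : (0 : ℝ) < n + α)
  have := Gamma_pos_of_pos (by positivity : (0 : ℝ) < n + 1)
  positivity

lemma cesK_succ_mul {α : ℝ} (hα : 0 < α) (k : ℕ) :
    cesK α (k + 1) * (k + 1) = cesK α k * (k + α) := by
  have hΓα := (Gamma_pos_of_pos hα).ne'
  have hΓk := (Gamma_pos_of_pos (by positivity : (0 : ℝ) < k + 1)).ne'
  unfold cesK
  push_cast
  rw [add_right_comm, Gamma_add_one (by positivity), Gamma_add_one (by positivity)]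
  field_simp

lemma succ_mul_cesK_div_cesK_succ_le {α : ℝ} (hα : 0 < α) {a b : ℕ} (hba : b < a) :
    (a + 1) * (cesK α (a + 1) / cesK (α + 1) (b + 1)) ≤ a * (cesK α a / cesK (α + 1) b) := by
  have hα1 : (0 : ℝ) < α + 1 := by linarith
  have hb : ((b : ℝ) + 1) ≤ a := by exact_mod_cast hba
  have hA := cesK_succ_mul hα a
  have hB := cesK_succ_mul hα1 b
  have hKa := cesK_pos hα a
  have hKb := cesK_pos hα1 b
  have hKb1 := cesK_pos hα1 (b + 1)
  have hkey : (a + α) * (b + 1) ≤ a * (b + (α + 1)) := by nlinarith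
  rw [mul_div_assoc', mul_comm _ (cesK α (a + 1)), hA, mul_div_assoc',
    div_le_div_iff₀ hKb1 hKb, ← mul_le_mul_iff_of_pos_right (by positivity : (0 : ℝ) < b + 1)]
  calc cesK α a * (a + α) * cesK (α + 1) b * (b + 1)
      = cesK α a * cesK (α + 1) b * ((a + α) * (b + 1)) := by ring
    _ ≤ cesK α a * cesK (α + 1) b * (a * (b + (α + 1))) :=
        mul_le_mul_of_nonneg_left hkey (by positivity)
    _ = a * cesK α a * cesK (α + 1) (b + 1) * (b + 1) := by
        rw [mul_assoc _ _ (b + 1 : ℝ), hB]; ring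

lemma cesK_div_cesK_le {α : ℝ} (hα : 0 < α) {n j : ℕ} (hnj : n < j) (m : ℕ) :
    cesK α (j + m) / cesK (α + 1) (n + m) ≤ j * (cesK α j / cesK (α + 1) n) / (j + m) := by
  have hanti : Antitone fun m : ℕ ↦
      ((j + m : ℕ) : ℝ) * (cesK α (j + m) / cesK (α + 1) (n + m)) :=
    antitone_nat_of_succ_le fun m ↦ by
      simpa only [← add_assoc, Nat.cast_succ] using
        succ_mul_cesK_div_cesK_succ_le hα (by omega : n + m < j + m)
  have hj : (0 : ℝ) < j := by exact_mod_cast n.zero_le.trans_lt hnj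
  have hjm : (0 : ℝ) < j + m := by positivity
  rw [le_div_iff₀ hjm, mul_comm]
  simpa using hanti (Nat.zero_le m)

lemma rpow_neg_succ_le {q y : ℝ} (hq : 1 < q) (hy : 0 < y) :
    (y + 1) ^ (-q) ≤ (y ^ (1 - q) - (y + 1) ^ (1 - q)) / (q - 1) := by
  have hy1 : (0 : ℝ) < y + 1 := by linarith
  have hbern : 1 + q * y⁻¹ ≤ (y + 1) ^ q / y ^ q := by
    rw [← div_rpow hy1.le hy.le, add_div, div_self hy.ne', one_div]
    exact one_add_mul_self_le_rpow_one_add (by linarith [inv_pos.2 hy]) hq.le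
  have hyq := rpow_pos_of_pos hy q
  have hy1q := rpow_pos_of_pos hy1 q
  rw [le_div_iff₀ (by linarith), rpow_sub hy, rpow_sub hy1, rpow_one, rpow_one, rpow_neg hy1.le]
  field_simp at hbern ⊢
  nlinarith

lemma sum_range_rpow_neg_le {q x : ℝ} (hq : 1 < q) (hx : 0 < x) (N : ℕ) :
    ∑ m ∈ range N, (x + m + 1) ^ (-q) ≤ x ^ (1 - q) / (q - 1) := by
  set φ : ℕ → ℝ := fun m ↦ (x + m) ^ (1 - q)
  calc ∑ m ∈ range N, (x + m + 1) ^ (-q)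
      ≤ ∑ m ∈ range N, (φ m - φ (m + 1)) / (q - 1) := by
        gcongr with m
        simpa [φ, add_assoc] using rpow_neg_succ_le hq (by positivity : 0 < x + m)
    _ = (φ 0 - φ N) / (q - 1) := by rw [← sum_div, sum_range_sub']
    _ ≤ x ^ (1 - q) / (q - 1) := by
        have : 0 ≤ φ N := by positivity
        gcongr
        simp only [φ, Nat.cast_zero, add_zero]
        linarith

/-- Lemma 2.2: tail estimate for quotients of Cesàro kernels. -/
theorem stmt7 (α q : ℝ) (hα : 0 < α) (hq : 1 < q) :
    ∃ C : ℝ, 0 < C ∧ ∀ n j : ℕ, n < j →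
      ∑' m : ℕ, (cesK α (j + 1 + m) / cesK (α + 1) (n + 1 + m)) ^ q
        ≤ C * j * (cesK α j / cesK (α + 1) n) ^ q := by
  have hq₁ : 0 < q - 1 := by linarith
  refine ⟨1 / (q - 1), by positivity, fun n j hnj ↦ ?_⟩
  have hj : (0 : ℝ) < j := by exact_mod_cast n.zero_le.trans_lt hnj
  have hquot (a b : ℕ) : 0 < cesK α a / cesK (α + 1) b :=
    div_pos (cesK_pos hα a) (cesK_pos (by linarith) b)
  set g₀ := cesK α j / cesK (α + 1) n
  have hg₀ : 0 < g₀ := hquot j n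
  have hterm (m : ℕ) : (cesK α (j + 1 + m) / cesK (α + 1) (n + 1 + m)) ^ q
      ≤ (j * g₀) ^ q * ((j : ℝ) + m + 1) ^ (-q) := by
    have h := cesK_div_cesK_le hα hnj (m + 1)
    rw [show j + (m + 1) = j + 1 + m by omega, show n + (m + 1) = n + 1 + m by omega,
      Nat.cast_succ, ← add_assoc] at h
    have hjm : (0 : ℝ) < j + m + 1 := by positivity
    calc _ ≤ (j * g₀ / ((j : ℝ) + m + 1)) ^ q :=
          rpow_le_rpow (hquot _ _).le h (by linarith)
      _ = (j * g₀) ^ q * ((j : ℝ) + m + 1) ^ (-q) := by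
          rw [div_rpow (mul_pos hj hg₀).le hjm.le, rpow_neg hjm.le, div_eq_mul_inv]
  refine tsum_le_of_sum_range_le (fun m ↦ (rpow_pos_of_pos (hquot _ _) q).le) fun N ↦ ?_
  calc _ ≤ ∑ m ∈ range N, (j * g₀) ^ q * ((j : ℝ) + m + 1) ^ (-q) :=
        sum_le_sum fun m _ ↦ hterm m
    _ = (j * g₀) ^ q * ∑ m ∈ range N, ((j : ℝ) + m + 1) ^ (-q) := (mul_sum ..).symm
    _ ≤ (j * g₀) ^ q * ((j : ℝ) ^ (1 - q) / (q - 1)) := by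
        gcongr
        exact sum_range_rpow_neg_le hq hj N
    _ = 1 / (q - 1) * j * g₀ ^ q := by
        rw [mul_rpow hj.le hg₀.le, rpow_sub hj, rpow_one]
        field_simp
end

section
/- Let k^α(n) = Γ(n+α)/(Γ(α)Γ(n+1)) be the Cesàro kernel. For n, u ∈ ℕ₀, real t > 0, and α a positive real that is not a nonnegative integer, the following identity holds: e^{-tu} ∑_{j=max(u,n)}^∞ C(j,u) k^{-α}(j-n) (1-e^{-t})^{j-u} = e^{-tα} ∑_{j=0}^{min(u,n)} C(n,j) k^{-α}(u-j) e^{-tj} (1-e^{-t})^{n-j}, where C(a,b) denotes the binomial coefficient. -/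
/-!
Put `x = 1 - e^{-t}`, so that `1 - x = e^{-t}`. Since `k^{-α}(m) = (-1)^m binom(α, m)`, the
binomial series gives `∑ₘ k^{-α}(m) xᵐ = (1 - x)^α`, and the identity
`binom(m, p) binom(α, m) = binom(α, p) binom(α - p, m - p)` turns it into
`∑ₘ binom(m, p) k^{-α}(m) x^{m-p} = k^{-α}(p) (1 - x)^{α-p}`. Expanding `binom(m + n, u)` by
Vandermonde as `∑_q binom(n, q) binom(m, u - q)` and summing over `m = j - n` gives the identity.
-/

open Finset

/-- The Cesàro kernel of order `-α`, via Gamma functions. -/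
noncomputable def kneg (α : ℝ) (m : ℕ) : ℝ :=
  Real.Gamma (m - α) / (Real.Gamma (-α) * Real.Gamma (m + 1))

theorem Ring.succ_mul_choose_succ {R : Type*} [Ring R] [BinomialRing R] (r : R) (m : ℕ) :
    (m + 1 : R) * Ring.choose r (m + 1) = Ring.choose r m * (r - m) := by
  have h := Ring.choose_smul_choose r (Nat.le_succ m)
  rwa [Nat.choose_succ_self_right, Nat.succ_eq_add_one, Nat.add_sub_cancel_left,
    Ring.choose_one_right, nsmul_eq_mul, Nat.cast_succ] at h

theorem Nat.add_choose_eq_sum_range (m n u : ℕ) :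
    (m + n).choose u = ∑ q ∈ range (min u n + 1), n.choose q * m.choose (u - q) := by
  rw [add_comm, Nat.add_choose_eq, Nat.sum_antidiagonal_eq_sum_range_succ_mk]
  refine (sum_subset (range_subset_range.2 (by omega)) fun q hqu hq => ?_).symm
  rw [mem_range] at hqu hq
  rw [Nat.choose_eq_zero_of_lt (by omega), zero_mul]

section
variable {β : ℝ}

lemma succ_mul_kneg_succ (hβ : ∀ k : ℕ, β ≠ k) (m : ℕ) :
    (m + 1 : ℝ) * kneg β (m + 1) = (m - β) * kneg β m := by
  have hm : (m : ℝ) - β ≠ 0 := sub_ne_zero.2 (hβ m).symm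
  have h1 : ((m + 1 : ℕ) : ℝ) - β = (m - β) + 1 := by push_cast; ring
  have h2 : ((m + 1 : ℕ) : ℝ) + 1 = (m + 1 : ℝ) + 1 := by push_cast; ring
  rw [kneg, kneg, h1, h2, Real.Gamma_add_one hm, Real.Gamma_add_one (by positivity)]
  have : Real.Gamma (m + 1) ≠ 0 := (Real.Gamma_pos_of_pos (by positivity)).ne'
  have hm1 : (m + 1 : ℝ) ≠ 0 := by positivity
  field_simp

lemma kneg_eq_neg_one_pow_mul_choose (hβ : ∀ k : ℕ, β ≠ k) (m : ℕ) :
    kneg β m = (-1) ^ m * Ring.choose β m := by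
  induction m with
  | zero =>
    have : Real.Gamma (-β) ≠ 0 := Real.Gamma_ne_zero fun k h => hβ k (by linarith)
    simp [kneg, this]
  | succ m ih =>
    have hm1 : (m + 1 : ℝ) ≠ 0 := by positivity
    apply mul_left_cancel₀ hm1
    rw [succ_mul_kneg_succ hβ, ih, mul_left_comm (m + 1 : ℝ), Ring.succ_mul_choose_succ,
      pow_succ]
    ring

lemma hasSum_kneg_mul_pow (hβ : ∀ k : ℕ, β ≠ k) {x : ℝ} (hx : |x| < 1) :
    HasSum (fun m => kneg β m * x ^ m) ((1 - x) ^ β) := by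
  have h := Real.one_add_rpow_hasFPowerSeriesOnBall_zero (a := β) |>.hasSum (y := -x)
    (by simpa [Metric.mem_eball, edist_zero_right, enorm_eq_nnnorm, ← NNReal.coe_lt_coe] using hx)
  simp only [binomialSeries_apply, List.ofFn_const, List.prod_replicate, smul_eq_mul,
    zero_sub, ← sub_eq_add_neg] at h
  refine h.congr_fun fun m => ?_
  rw [kneg_eq_neg_one_pow_mul_choose hβ, neg_pow]
  ring

end

section
variable {α : ℝ}

lemma kneg_add_mul_choose (hα : ∀ k : ℕ, α ≠ k) (p s : ℕ) :
    kneg α (s + p) * (s + p).choose p = kneg α p * kneg (α - p) s := by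
  have hαp : ∀ k : ℕ, α - p ≠ k := fun k h => hα (k + p) (by push_cast; linarith)
  have h := Ring.choose_smul_choose α (Nat.le_add_left p s)
  rw [Nat.add_sub_cancel, nsmul_eq_mul] at h
  rw [kneg_eq_neg_one_pow_mul_choose hα, kneg_eq_neg_one_pow_mul_choose hα,
    kneg_eq_neg_one_pow_mul_choose hαp, pow_add]
  linear_combination (-1) ^ s * (-1) ^ p * h

lemma hasSum_choose_mul_kneg_mul_pow (hα : ∀ k : ℕ, α ≠ k) (p : ℕ) {x : ℝ} (hx : |x| < 1) :
    HasSum (fun m => m.choose p * kneg α m * x ^ (m - p)) (kneg α p * (1 - x) ^ (α - p)) := by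
  have hαp : ∀ k : ℕ, α - p ≠ k := fun k h => hα (k + p) (by push_cast; linarith)
  refine (hasSum_nat_add_iff' p).1 ?_
  have hlow : ∑ i ∈ range p, (i.choose p * kneg α i * x ^ (i - p) : ℝ) = 0 :=
    sum_eq_zero fun i hi => by simp [Nat.choose_eq_zero_of_lt (mem_range.1 hi)]
  rw [hlow, sub_zero]
  refine ((hasSum_kneg_mul_pow hαp hx).mul_left (kneg α p)).congr_fun fun s => ?_
  rw [Nat.add_sub_cancel, ← mul_assoc, ← kneg_add_mul_choose hα]
  ring

lemma hasSum_add_choose_mul_kneg_mul_pow (hα : ∀ k : ℕ, α ≠ k) (n u : ℕ) {x : ℝ}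
    (hx : |x| < 1) :
    HasSum (fun m => (m + n).choose u * kneg α m * x ^ (m + n - u))
      (∑ q ∈ range (min u n + 1),
        n.choose q * x ^ (n - q) * (kneg α (u - q) * (1 - x) ^ (α - (u - q : ℕ)))) := by
  refine (hasSum_sum fun q _ =>
    (hasSum_choose_mul_kneg_mul_pow hα (u - q) hx).mul_left (n.choose q * x ^ (n - q))).congr_fun
    fun m => ?_
  rw [Nat.add_choose_eq_sum_range, Nat.cast_sum, sum_mul, sum_mul]
  refine sum_congr rfl fun q hq => ?_
  rw [mem_range] at hq
  rcases lt_or_ge m (u - q) with hm | hm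
  · simp [Nat.choose_eq_zero_of_lt hm]
  · have : m + n - u = (n - q) + (m - (u - q)) := by omega
    rw [this, pow_add]
    push_cast
    ring

end

lemma exp_neg_mul_mul_exp_neg_rpow (t α : ℝ) {q u : ℕ} (hqu : q ≤ u) :
    Real.exp (-t * u) * Real.exp (-t) ^ (α - (u - q : ℕ)) =
      Real.exp (-t * α) * Real.exp (-t * q) := by
  rw [← Real.exp_mul, ← Real.exp_add, ← Real.exp_add, Nat.cast_sub hqu]
  ring_nf

lemma hasSum_exp_mul_add_choose_mul_kneg {α t : ℝ} (ht : 0 < t) (hα : ∀ k : ℕ, α ≠ k)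
    (n u : ℕ) :
    HasSum (fun m : ℕ => Real.exp (-t * u) *
        ((m + n).choose u * kneg α m * (1 - Real.exp (-t)) ^ (m + n - u)))
      (Real.exp (-t * α) * ∑ j ∈ range (min u n + 1),
        n.choose j * kneg α (u - j) * Real.exp (-t * j) * (1 - Real.exp (-t)) ^ (n - j)) := by
  have hx : |1 - Real.exp (-t)| < 1 := by
    have := Real.exp_lt_one_iff.2 (neg_lt_zero.2 ht)
    rw [abs_lt]
    constructor <;> linarith [Real.exp_pos (-t)]
  have hterm : ∀ q ∈ range (min u n + 1),
      Real.exp (-t * u) * (n.choose q * (1 - Real.exp (-t)) ^ (n - q) *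
        (kneg α (u - q) * (1 - (1 - Real.exp (-t))) ^ (α - (u - q : ℕ)))) =
      Real.exp (-t * α) *
        (n.choose q * kneg α (u - q) * Real.exp (-t * q) * (1 - Real.exp (-t)) ^ (n - q)) := by
    intro q hq
    have hqu : q ≤ u := by rw [mem_range] at hq; omega
    rw [sub_sub_cancel]
    linear_combination n.choose q * (1 - Real.exp (-t)) ^ (n - q) * kneg α (u - q) *
      exp_neg_mul_mul_exp_neg_rpow t α hqu
  have key := (hasSum_add_choose_mul_kneg_mul_pow hα n u hx).mul_left (Real.exp (-t * u))
  rwa [mul_sum, sum_congr rfl hterm, ← mul_sum] at key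

theorem stmt8_general (α t : ℝ) (ht : 0 < t) (hαn : ∀ m : ℕ, α ≠ m) (n u : ℕ) :
    HasSum (fun i : ℕ =>
      Real.exp (-t * u) * (Nat.choose (max u n + i) u) * kneg α (max u n + i - n) *
        (1 - Real.exp (-t)) ^ (max u n + i - u))
      (Real.exp (-t * α) * ∑ j ∈ Finset.range (min u n + 1),
        (Nat.choose n j) * kneg α (u - j) * Real.exp (-t * j) *
          (1 - Real.exp (-t)) ^ (n - j)) := by
  have key := hasSum_exp_mul_add_choose_mul_kneg ht hαn n u
  -- substitute `m = j - n`, where `j = max u n + i`; the skipped `m` have `binom(m + n, u) = 0`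
  refine (((add_left_injective (max u n - n)).hasSum_iff fun m hm => ?_).2 key).congr_fun
    fun i => ?_
  · have hlow : m + n < u := by
      by_contra h
      exact hm ⟨m - (max u n - n), by dsimp only; omega⟩
    simp [Nat.choose_eq_zero_of_lt hlow]
  · have hi : max u n + i = i + (max u n - n) + n := by omega
    rw [Function.comp_apply, hi, Nat.add_sub_cancel]
    ring

/-- Theorem 2.3: key summation identity. -/
theorem stmt8 (α t : ℝ) (ht : 0 < t) (hα : 0 < α) (hαn : ∀ m : ℕ, α ≠ m) (n u : ℕ) :
    HasSum (fun i : ℕ =>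
      Real.exp (-t * u) * (Nat.choose (max u n + i) u) * kneg α (max u n + i - n) *
        (1 - Real.exp (-t)) ^ (max u n + i - u))
      (Real.exp (-t * α) * ∑ j ∈ Finset.range (min u n + 1),
        (Nat.choose n j) * kneg α (u - j) * Real.exp (-t * j) *
          (1 - Real.exp (-t)) ^ (n - j)) :=
  stmt8_general α t ht hαn n u
end

section
/- Let W^α denote the fractional Weyl difference W^α f(n) = ∑_{j=n}^∞ k^{-α}(j-n) f(j) (for α ∈ ℝ, using the Weyl sum for α < 0). For any α ∈ ℝ and any finitely supported sequence f: ℕ₀ → ℂ, W^α(j ↦ j·f(j))(n) = (n+α)·W^α f(n) - α·W^{α-1} f(n) for all n ∈ ℕ₀. -/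
/-- The Cesàro kernel `k^α(n) = α(α+1)⋯(α+n-1)/n!`, valid for every real `α`. -/
noncomputable def kk (α : ℝ) (n : ℕ) : ℝ :=
  (ascPochhammer ℝ n).eval α / n.factorial

lemma kk_key (α : ℝ) (i : ℕ) : ((i : ℝ) - α) * kk (-α) i = -α * kk (1 - α) i := by
  have h1 : (ascPochhammer ℝ (i + 1)).eval (-α)
      = (-α) * (ascPochhammer ℝ i).eval (1 - α) := by
    rw [ascPochhammer_succ_left]
    simp [Polynomial.eval_comp]
    ring_nf
    tauto
  have h2 : (ascPochhammer ℝ (i + 1)).eval (-α)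
      = (ascPochhammer ℝ i).eval (-α) * (-α + i) := by
    rw [ascPochhammer_succ_right]
    simp
  have h3 : ((i : ℝ) - α) * (ascPochhammer ℝ i).eval (-α)
      = -α * (ascPochhammer ℝ i).eval (1 - α) := by
    rw [← h1, h2]; ring
  unfold kk
  have hfac : (i.factorial : ℝ) ≠ 0 := Nat.cast_ne_zero.mpr i.factorial_ne_zero
  field_simp
  linarith [h3]

/-- Proposition 3.3: `W^α(j f(j))(n) = (n+α) W^α f(n) - α W^{α-1} f(n)`. -/
theorem stmt10 (α : ℝ) (f : ℕ → ℂ) (hf : ∃ N, ∀ k ≥ N, f k = 0) (n : ℕ) :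
    ∑' i : ℕ, (kk (-α) i : ℂ) * ((n + i : ℕ) : ℂ) * f (n + i)
    = ((n : ℂ) + α) * ∑' i : ℕ, (kk (-α) i : ℂ) * f (n + i)
      - (α : ℂ) * ∑' i : ℕ, (kk (1 - α) i : ℂ) * f (n + i) := by
  obtain ⟨N, hN⟩ := hf
  have hzero : ∀ i ∉ Finset.range N, f (n + i) = 0 := by
    intro i hi
    exact hN _ (le_trans (not_lt.mp (fun h => hi (Finset.mem_range.mpr h))) (Nat.le_add_left i n))
  have hs1 : Summable (fun i : ℕ => ((n : ℂ) + α) * ((kk (-α) i : ℂ) * f (n + i))) :=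
    summable_of_ne_finset_zero (s := Finset.range N)
      (fun i hi => by rw [hzero i hi]; ring)
  have hs2 : Summable (fun i : ℕ => (α : ℂ) * ((kk (1 - α) i : ℂ) * f (n + i))) :=
    summable_of_ne_finset_zero (s := Finset.range N)
      (fun i hi => by rw [hzero i hi]; ring)
  have hterm : ∀ i : ℕ, (kk (-α) i : ℂ) * ((n + i : ℕ) : ℂ) * f (n + i)
      = ((n : ℂ) + α) * ((kk (-α) i : ℂ) * f (n + i))
        - (α : ℂ) * ((kk (1 - α) i : ℂ) * f (n + i)) := by
    intro i
    have hC : ((i : ℂ) - α) * (kk (-α) i : ℂ) = -α * (kk (1 - α) i : ℂ) := by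
      exact_mod_cast congrArg (Complex.ofReal ·) (kk_key α i)
    push_cast
    linear_combination f (n + i) * hC
  rw [tsum_congr hterm, Summable.tsum_sub hs1 hs2, tsum_mul_left, tsum_mul_left]
end

section
/- Let f: ℕ₀ → ℂ be such that its Z-transform f̃(z) = ∑_{n=0}^∞ f(n) z^n converges for |z| < 1, and let T(t)f(n) = ∑_{j=0}^n C(n,j) e^{-tj}(1-e^{-t})^{n-j} f(j). Then for every t > 0 and |z| < 1, ∑_{n=0}^∞ T(t)f(n) z^n = (1/(1 - z(1-e^{-t}))) · f̃(e^{-t}z/(1 - z(1-e^{-t}))). -/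
/-! Writing `z ^ n = z ^ j * z ^ (n - j)`, the series is the antidiagonal summation of the family
`C(j + k, j) f j (a z) ^ j (z b) ^ k` on `ℕ × ℕ`. Summing over `k` first, the negative binomial
series `∑ₖ C(j + k, j) y ^ k = (1 - y)⁻¹ ^ (j + 1)` turns the `j`-th row into
`(1 - z b)⁻¹ f j w ^ j` with `w = a z / (1 - z b)`. The same computation on norms bounds the rows by
`(1 - ‖z b‖)⁻¹ ‖f j‖ ρ ^ j` with `ρ = ‖a z‖ / (1 - ‖z b‖)`, and `ρ < 1` once `‖a‖ + ‖b‖ ≤ 1`, so the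
family is absolutely summable and both orders of summation agree. -/

/-- The one-parameter family `T(t)` on sequences. -/
noncomputable def Tsem (t : ℝ) (f : ℕ → ℂ) (n : ℕ) : ℂ :=
  ∑ j ∈ Finset.range (n + 1),
    (n.choose j : ℂ) * (Real.exp (-t)) ^ j * (1 - (Real.exp (-t) : ℂ)) ^ (n - j) * f j

open Finset

theorem HasSum.sum_antidiagonal {α A : Type*} [AddCommMonoid α] [TopologicalSpace α]
    [ContinuousAdd α] [RegularSpace α] [AddCommMonoid A] [HasAntidiagonal A]
    {F : A × A → α} {s : α} (h : HasSum F s) :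
    HasSum (fun n ↦ ∑ p ∈ antidiagonal n, F p) s :=
  (HasAntidiagonal.sigmaAntidiagonalEquivProd.hasSum_iff.2 h).sigma fun n ↦ by
    rw [← sum_coe_sort]
    exact hasSum_fintype _

theorem summable_norm_mul_pow_of_summable_mul_pow {𝕜 : Type*} [NormedDivisionRing 𝕜]
    {f : ℕ → 𝕜} {w : 𝕜} (h : Summable fun n ↦ f n * w ^ n) {r : ℝ} (hr₀ : 0 ≤ r)
    (hr : r < ‖w‖) : Summable fun n ↦ ‖f n‖ * r ^ n := by
  obtain ⟨C, hC⟩ := h.tendsto_atTop_zero.norm.bddAbove_range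
  have hw : 0 < ‖w‖ := hr₀.trans_lt hr
  refine .of_nonneg_of_le (fun n ↦ by positivity) (fun n ↦ ?_)
    ((summable_geometric_of_lt_one (by positivity) ((div_lt_one hw).2 hr)).mul_left C)
  calc ‖f n‖ * r ^ n = ‖f n * w ^ n‖ * (r / ‖w‖) ^ n := by
        rw [norm_mul, norm_pow, div_pow]; field_simp
    _ ≤ C * (r / ‖w‖) ^ n := by gcongr; exact hC ⟨n, rfl⟩

theorem summable_norm_mul_pow_of_forall_summable {𝕜 : Type*} [DenselyNormedField 𝕜]
    {f : ℕ → 𝕜} (hf : ∀ w : 𝕜, ‖w‖ < 1 → Summable fun n ↦ f n * w ^ n) {r : ℝ} (hr₀ : 0 ≤ r)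
    (hr : r < 1) : Summable fun n ↦ ‖f n‖ * r ^ n :=
  let ⟨w, hrw, hw⟩ := NormedField.exists_lt_norm_lt 𝕜 hr₀ hr
  summable_norm_mul_pow_of_summable_mul_pow (hf w hw) hr₀ hrw

theorem hasSum_choose_mul_pow_mul_geometric {𝕜 : Type*} [NormedField 𝕜] [CompleteSpace 𝕜]
    (c x : 𝕜) {y : 𝕜} (hy : ‖y‖ < 1) (j : ℕ) :
    HasSum (fun k ↦ ((k + j).choose j : 𝕜) * (c * x ^ j) * y ^ k)
      (1 / (1 - y) * (c * (x / (1 - y)) ^ j)) := by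
  have hy₁ : 1 - y ≠ 0 := sub_ne_zero.2 fun h ↦ by simp [← h] at hy
  rw [show 1 / (1 - y) * (c * (x / (1 - y)) ^ j) = c * x ^ j * (1 / (1 - y) ^ (j + 1)) by
    rw [div_pow, pow_succ]; field_simp]
  exact ((hasSum_choose_mul_geometric_of_norm_lt_one j hy).mul_left _).congr_fun fun k ↦ by ring

def binomialTransform {R : Type*} [Semiring R] (a b : R) (f : ℕ → R) (n : ℕ) : R :=
  ∑ j ∈ range (n + 1), (n.choose j : R) * a ^ j * b ^ (n - j) * f j

theorem hasSum_binomialTransform_mul_pow {𝕜 : Type*} [NormedField 𝕜] [CompleteSpace 𝕜]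
    {f : ℕ → 𝕜} {a b z : 𝕜} (hbz : ‖z * b‖ < 1)
    (hf : Summable fun j ↦ ‖f j‖ * (‖a * z‖ / (1 - ‖z * b‖)) ^ j) :
    HasSum (fun n ↦ binomialTransform a b f n * z ^ n)
      (1 / (1 - z * b) * ∑' j, f j * (a * z / (1 - z * b)) ^ j) := by
  set x := a * z
  set y := z * b
  let F : ℕ × ℕ → 𝕜 := fun p ↦ ((p.2 + p.1).choose p.1 : 𝕜) * (f p.1 * x ^ p.1) * y ^ p.2
  have hF_norm : Summable fun p ↦ ‖F p‖ := by
    refine .of_nonneg_of_le (fun _ ↦ norm_nonneg _) (fun p ↦ ?_)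
      (f := fun p : ℕ × ℕ ↦ ((p.2 + p.1).choose p.1 : ℝ) * (‖f p.1‖ * ‖x‖ ^ p.1) * ‖y‖ ^ p.2) ?_
    · simp only [F, norm_mul, norm_pow]
      gcongr
      simpa using Nat.norm_cast_le (α := 𝕜) _
    · have hy : ‖‖y‖‖ < 1 := by rwa [norm_norm]
      refine (summable_prod_of_nonneg fun _ ↦ by positivity).2
        ⟨fun j ↦ (hasSum_choose_mul_pow_mul_geometric ‖f j‖ ‖x‖ hy j).summable, ?_⟩
      simp_rw [fun j ↦ (hasSum_choose_mul_pow_mul_geometric ‖f j‖ ‖x‖ hy j).tsum_eq]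
      exact hf.mul_left _
  have hF : HasSum F (∑' j, 1 / (1 - y) * (f j * (x / (1 - y)) ^ j)) := by
    have hfiber := hF_norm.of_norm.hasSum.prod_fiberwise
      fun j ↦ hasSum_choose_mul_pow_mul_geometric (f j) x hbz j
    exact hfiber.tsum_eq ▸ hF_norm.of_norm.hasSum
  rw [tsum_mul_left] at hF
  refine hF.sum_antidiagonal.congr_fun fun n ↦ ?_
  rw [Nat.sum_antidiagonal_eq_sum_range_succ_mk, binomialTransform, sum_mul]
  refine sum_congr rfl fun j hj ↦ ?_
  obtain ⟨k, rfl⟩ := Nat.exists_eq_add_of_le (Nat.lt_succ_iff.1 (mem_range.1 hj))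
  simp only [F, x, y, Nat.add_sub_cancel_left, add_comm k j]
  ring

theorem hasSum_binomialTransform_mul_pow_of_norm_add_norm_le_one {𝕜 : Type*}
    [DenselyNormedField 𝕜] [CompleteSpace 𝕜] {f : ℕ → 𝕜}
    (hf : ∀ w : 𝕜, ‖w‖ < 1 → Summable fun n ↦ f n * w ^ n) {a b z : 𝕜}
    (hab : ‖a‖ + ‖b‖ ≤ 1) (hz : ‖z‖ < 1) :
    HasSum (fun n ↦ binomialTransform a b f n * z ^ n)
      (1 / (1 - z * b) * ∑' j, f j * (a * z / (1 - z * b)) ^ j) := by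
  have hbz : ‖z * b‖ < 1 := by
    rw [norm_mul]; nlinarith [norm_nonneg a, norm_nonneg b, norm_nonneg z]
  have hρ : ‖a * z‖ / (1 - ‖z * b‖) < 1 := by
    rw [div_lt_one (by linarith), norm_mul, norm_mul]
    nlinarith [norm_nonneg a, norm_nonneg b, norm_nonneg z]
  exact hasSum_binomialTransform_mul_pow hbz <|
    summable_norm_mul_pow_of_forall_summable hf (div_nonneg (norm_nonneg _) (by linarith)) hρ

theorem Complex.norm_ofReal_add_norm_one_sub_ofReal {s : ℝ} (h₀ : 0 ≤ s) (h₁ : s ≤ 1) :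
    ‖(s : ℂ)‖ + ‖1 - (s : ℂ)‖ = 1 := by
  rw [← Complex.ofReal_one, ← Complex.ofReal_sub, Complex.norm_real, Complex.norm_real,
    Real.norm_of_nonneg h₀, Real.norm_of_nonneg (sub_nonneg.2 h₁)]
  ring

/-- Z-transform of the semigroup `T(t)`. -/
theorem stmt14 (f : ℕ → ℂ) (hf : ∀ z : ℂ, ‖z‖ < 1 → Summable (fun n : ℕ => f n * z ^ n))
    (t : ℝ) (ht : 0 < t) (z : ℂ) (hz : ‖z‖ < 1) :
    HasSum (fun n : ℕ => Tsem t f n * z ^ n)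
      ((1 / (1 - z * (1 - Real.exp (-t)))) *
        ∑' n : ℕ, f n * ((Real.exp (-t) : ℂ) * z / (1 - z * (1 - Real.exp (-t)))) ^ n) :=
  -- `Tsem t` is definitionally `binomialTransform (exp (-t)) (1 - exp (-t))`
  hasSum_binomialTransform_mul_pow_of_norm_add_norm_le_one hf
    (Complex.norm_ofReal_add_norm_one_sub_ofReal (Real.exp_pos _).le
      (Real.exp_le_one_iff.2 (neg_nonpos.2 ht.le))).le hz
end

section
/- Let f: ℕ₀ → ℂ be such that f̃(z) = ∑_{n=0}^∞ f(n) z^n converges for |z| < 1, and define S(t)f(n) = e^{-tn} ∑_{j=n}^∞ C(j,n)(1-e^{-t})^{j-n} f(j). Then for every t > 0 and |z| < 1, ∑_{n=0}^∞ S(t)f(n) z^n = f̃(e^{-t}(z-1) + 1). -/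
/-!
Expanding `(x + y) ^ n` binomially turns `∑ f n (x + y) ^ n` into the double series over pairs
`(k, i)` with terms `C(k + i, k) x ^ k y ^ i f (k + i)`, which is absolutely summable as soon as
`∑ ‖f n‖ (‖x‖ + ‖y‖) ^ n` converges. Summed along the antidiagonals `k + i = n` it gives
`∑ f n (x + y) ^ n`; summed along the rows `k = n` it gives `∑ x ^ n ∑ C(n + i, n) y ^ i f (n + i)`.
For `S(t)` take `x = e^{-t} z` and `y = 1 - e^{-t}`, so that `‖x‖ + ‖y‖ = 1 - e^{-t} (1 - ‖z‖) < 1`.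
-/

open Finset

/-- The one-parameter family `S(t)` on sequences. -/
noncomputable def Sop (t : ℝ) (f : ℕ → ℂ) (n : ℕ) : ℂ :=
  (Real.exp (-t)) ^ n *
    ∑' i : ℕ, ((n + i).choose n : ℂ) * (1 - (Real.exp (-t) : ℂ)) ^ i * f (n + i)

def binomialTerm {R : Type*} [Semiring R] (f : ℕ → R) (x y : R) (p : ℕ × ℕ) : R :=
  ((p.1 + p.2).choose p.1 : R) * x ^ p.1 * y ^ p.2 * f (p.1 + p.2)

theorem sum_antidiagonal_binomialTerm {R : Type*} [CommSemiring R] (f : ℕ → R) (x y : R)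
    (n : ℕ) : ∑ p ∈ antidiagonal n, binomialTerm f x y p = f n * (x + y) ^ n := by
  rw [(Commute.all x y).add_pow', mul_sum]
  refine sum_congr rfl fun p hp => ?_
  rw [binomialTerm, mem_antidiagonal.mp hp, nsmul_eq_mul]
  ring

section BinomialRearrangement

variable {𝕜 : Type*} [NormedField 𝕜]

theorem norm_binomialTerm_le (f : ℕ → 𝕜) (x y : 𝕜) (p : ℕ × ℕ) :
    ‖binomialTerm f x y p‖ ≤ binomialTerm (fun n => ‖f n‖) ‖x‖ ‖y‖ p := by
  simp only [binomialTerm, norm_mul, norm_pow]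
  gcongr
  simpa using Nat.norm_cast_le (α := 𝕜) _

theorem summable_binomialTerm_norm {f : ℕ → 𝕜} {x y : 𝕜}
    (h : Summable fun n => ‖f n‖ * (‖x‖ + ‖y‖) ^ n) :
    Summable (binomialTerm (fun n => ‖f n‖) ‖x‖ ‖y‖) := by
  rw [← HasAntidiagonal.sigmaAntidiagonalEquivProd.summable_iff]
  refine (summable_sigma_of_nonneg fun _ => by
    simp only [Function.comp_apply, binomialTerm]; positivity).mpr
    ⟨fun n => (hasSum_fintype _).summable, h.congr fun n => ?_⟩
  rw [tsum_fintype]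
  exact (sum_antidiagonal_binomialTerm _ _ _ n).symm.trans
    (sum_coe_sort (antidiagonal n) (binomialTerm (fun n => ‖f n‖) ‖x‖ ‖y‖)).symm

variable [CompleteSpace 𝕜] {f : ℕ → 𝕜} {x y : 𝕜}

theorem summable_binomialTerm (h : Summable fun n => ‖f n‖ * (‖x‖ + ‖y‖) ^ n) :
    Summable (binomialTerm f x y) :=
  (summable_binomialTerm_norm h).of_norm_bounded (norm_binomialTerm_le f x y)

theorem hasSum_mul_add_pow_tsum_binomialTerm (h : Summable fun n => ‖f n‖ * (‖x‖ + ‖y‖) ^ n) :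
    HasSum (fun n => f n * (x + y) ^ n) (∑' p, binomialTerm f x y p) := by
  have hsigma := (HasAntidiagonal.sigmaAntidiagonalEquivProd.hasSum_iff).mpr
    (summable_binomialTerm h).hasSum
  refine hsigma.sigma fun n => ?_
  rw [← sum_antidiagonal_binomialTerm]
  exact (antidiagonal n).hasSum _

theorem hasSum_pow_mul_tsum_choose_tsum_binomialTerm
    (h : Summable fun n => ‖f n‖ * (‖x‖ + ‖y‖) ^ n) :
    HasSum (fun n => x ^ n * ∑' i, ((n + i).choose n : 𝕜) * y ^ i * f (n + i))
      (∑' p, binomialTerm f x y p) := by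
  have hs := summable_binomialTerm h
  refine hs.hasSum.prod_fiberwise fun n => ?_
  have hrow : ∀ i, binomialTerm f x y (n, i) =
      x ^ n * (((n + i).choose n : 𝕜) * y ^ i * f (n + i)) :=
    fun i => by simp only [binomialTerm]; ring
  rw [← tsum_mul_left, ← tsum_congr hrow]
  exact (hs.prod_factor n).hasSum

theorem hasSum_pow_mul_tsum_choose (h : Summable fun n => ‖f n‖ * (‖x‖ + ‖y‖) ^ n) :
    HasSum (fun n => x ^ n * ∑' i, ((n + i).choose n : 𝕜) * y ^ i * f (n + i))
      (∑' n, f n * (x + y) ^ n) := by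
  rw [(hasSum_mul_add_pow_tsum_binomialTerm h).tsum_eq]
  exact hasSum_pow_mul_tsum_choose_tsum_binomialTerm h

end BinomialRearrangement

/-- Z-transform of the semigroup `S(t)`. -/
theorem stmt15 (f : ℕ → ℂ)
    (hf : ∀ r : ℝ, 0 ≤ r → r < 1 → Summable (fun n : ℕ => ‖f n‖ * r ^ n))
    (t : ℝ) (ht : 0 < t) (z : ℂ) (hz : ‖z‖ < 1) :
    HasSum (fun n : ℕ => Sop t f n * z ^ n)
      (∑' n : ℕ, f n * ((Real.exp (-t) : ℂ) * (z - 1) + 1) ^ n) := by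
  set a := Real.exp (-t)
  have ha0 : 0 < a := Real.exp_pos _
  have ha1 : a < 1 := Real.exp_lt_one_iff.mpr (by linarith)
  have hnorm : ‖(a : ℂ) * z‖ + ‖1 - (a : ℂ)‖ = 1 - a * (1 - ‖z‖) := by
    rw [norm_mul, Complex.norm_real, ← Complex.ofReal_one, ← Complex.ofReal_sub,
      Complex.norm_real, Real.norm_of_nonneg ha0.le, Real.norm_of_nonneg (by linarith)]
    ring
  have hr : 0 < a * (1 - ‖z‖) := mul_pos ha0 (by linarith)
  have hsum := hasSum_pow_mul_tsum_choose (f := f) (x := a * z) (y := 1 - a)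
    (by rw [hnorm]; exact hf _ (by nlinarith [norm_nonneg z]) (by linarith))
  have hterm : ∀ n, Sop t f n * z ^ n =
      ((a : ℂ) * z) ^ n * ∑' i, ((n + i).choose n : ℂ) * (1 - (a : ℂ)) ^ i * f (n + i) :=
    fun n => by simp only [Sop, mul_pow]; ring
  have hxy : (a : ℂ) * (z - 1) + 1 = a * z + (1 - a) := by ring
  simpa only [hterm, hxy] using hsum
end

section
/- Let α ≥ 0, t ≥ 0, and let f: ℕ₀ → ℂ be finitely supported. Define S(t)f(n) = e^{-tn} ∑_{j=n}^∞ C(j,n)(1-e^{-t})^{j-n} f(j) and W^α f(n) = ∑_{j=n}^∞ k^{-α}(j-n) f(j). Then W^α(S(t)f)(n) = e^{-tn} ∑_{j=n}^∞ C(j+α, n+α) (1-e^{-t})^{j-n} W^α f(j) for every n ∈ ℕ₀, where C(j+α,n+α) = Γ(j+α+1)/(Γ(n+α+1)Γ(j-n+1)). -/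
open Polynomial Finset

/-- generalized binomial coefficient -/
noncomputable def bin (β : ℝ) (q : ℕ) : ℝ := (descPochhammer ℝ q).eval β / q.factorial

lemma bin_nat (b q : ℕ) : bin (b : ℝ) q = (b.choose q : ℝ) := by
  rw [bin, descPochhammer_eval_eq_descFactorial, Nat.descFactorial_eq_factorial_mul_choose]
  push_cast
  rw [mul_comm, mul_div_assoc, div_self (by positivity : ((q.factorial : ℝ)) ≠ 0), mul_one]

/-- generalized Vandermonde with one real argument -/
lemma vandermonde_real (γ s : ℕ) (β : ℝ) :
    ∑ q ∈ range (s + 1), bin β q * (γ.choose (s - q) : ℝ) = bin (β + γ) s := by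
  set P : Polynomial ℝ :=
    (∑ q ∈ range (s + 1), Polynomial.C ((γ.choose (s - q) : ℝ) / q.factorial) * descPochhammer ℝ q)
      - Polynomial.C ((s.factorial : ℝ)⁻¹) * (descPochhammer ℝ s).comp (X + Polynomial.C (γ : ℝ))
    with hP
  have hroot : ∀ b : ℕ, P.eval (b : ℝ) = 0 := by
    intro b
    have hv : ((b + γ).choose s : ℝ)
        = ∑ q ∈ range (s + 1), (b.choose q : ℝ) * (γ.choose (s - q) : ℝ) := by
      rw [Nat.add_choose_eq]
      rw [Finset.Nat.sum_antidiagonal_eq_sum_range_succ_mk]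
      push_cast
      rfl
    simp only [hP, eval_sub, eval_finset_sum, eval_mul, eval_C, eval_comp, eval_add, eval_X]
    rw [sub_eq_zero]
    have hc : ((b : ℝ) + γ) = ((b + γ : ℕ) : ℝ) := by push_cast; ring
    rw [hc, descPochhammer_eval_eq_descFactorial]
    calc ∑ q ∈ range (s + 1), (γ.choose (s - q) : ℝ) / q.factorial * (descPochhammer ℝ q).eval (b:ℝ)
        = ∑ q ∈ range (s + 1), (b.choose q : ℝ) * (γ.choose (s - q) : ℝ) := by
          refine Finset.sum_congr rfl fun q _ => ?_
          rw [descPochhammer_eval_eq_descFactorial, Nat.descFactorial_eq_factorial_mul_choose]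
          push_cast
          field_simp
      _ = (s.factorial : ℝ)⁻¹ * ((b + γ).descFactorial s : ℝ) := by
          rw [Nat.descFactorial_eq_factorial_mul_choose, ← hv]
          push_cast
          field_simp
  have hP0 : P = 0 := by
    apply Polynomial.eq_zero_of_infinite_isRoot
    apply Set.Infinite.mono (s := Set.range (Nat.cast : ℕ → ℝ))
    · rintro x ⟨b, rfl⟩; exact hroot b
    · exact Set.infinite_range_of_injective Nat.cast_injective
  have := congrArg (Polynomial.eval β) hP0
  simp only [hP, eval_sub, eval_finset_sum, eval_mul, eval_C, eval_comp, eval_add, eval_X,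
    eval_zero, sub_eq_zero] at this
  calc ∑ q ∈ range (s + 1), bin β q * (γ.choose (s - q) : ℝ)
      = ∑ q ∈ range (s + 1), (γ.choose (s - q) : ℝ) / q.factorial * (descPochhammer ℝ q).eval β := by
        refine Finset.sum_congr rfl fun q _ => ?_; rw [bin]; ring
    _ = (s.factorial : ℝ)⁻¹ * (descPochhammer ℝ s).eval (β + γ) := this
    _ = bin (β + γ) s := by rw [bin]; ring

lemma kk_mul_choose (β : ℝ) {p i : ℕ} (h : p ≤ i) :
    kk β i * (i.choose p : ℝ) = kk β p * kk (β + p) (i - p) := by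
  have hm := ascPochhammer_mul (S := ℝ) p (i - p)
  have he := congrArg (Polynomial.eval β) hm
  rw [Nat.add_sub_cancel' h] at he
  simp only [eval_mul, eval_comp, eval_add, eval_X, eval_natCast] at he
  rw [kk, kk, kk, Nat.cast_choose ℝ h, ← he]
  have h1 : (i.factorial : ℝ) ≠ 0 := by positivity
  have h2 : (p.factorial : ℝ) ≠ 0 := by positivity
  have h3 : ((i - p).factorial : ℝ) ≠ 0 := by positivity
  field_simp

lemma bin_neg (β : ℝ) (q : ℕ) : bin (-β) q = (-1) ^ q * kk β q := by
  have := ascPochhammer_eval_neg_eq_descPochhammer ℝ (-β) q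
  rw [neg_neg] at this
  rw [bin, kk, this]
  have h4 : ((-1:ℝ)^q) * ((-1:ℝ)^q) = 1 := by
    rw [← pow_add]; exact Even.neg_one_pow ⟨q, by ring⟩
  linear_combination (-(Polynomial.eval (-β) (descPochhammer ℝ q) / q.factorial)) * h4

lemma bin_eq_kk (x : ℝ) (s : ℕ) : bin x s = kk (x - s + 1) s := by
  rw [bin, kk, descPochhammer_eval_eq_ascPochhammer]

lemma vander2 (α : ℝ) (n p m : ℕ) (h : p ≤ m) :
    ∑ q ∈ range (m - p + 1), (-1:ℝ)^q * kk ((p:ℝ) - α) q * ((n+m).choose (n+p+q) : ℝ)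
      = kk (α + n + 1) (m - p) := by
  set s := m - p with hs
  have hcal : ∀ q ∈ range (s+1), (-1:ℝ)^q * kk ((p:ℝ) - α) q * ((n+m).choose (n+p+q) : ℝ)
      = bin (α - p) q * ((n+m).choose (s - q) : ℝ) := by
    intro q hq
    rw [mem_range] at hq
    have h1 : bin (α - (p:ℝ)) q = (-1:ℝ)^q * kk ((p:ℝ) - α) q := by
      have := bin_neg ((p:ℝ) - α) q
      rwa [neg_sub] at this
    have h2 : (n+m).choose (s - q) = (n+m).choose (n+p+q) := by
      have he : s - q = (n+m) - (n+p+q) := by omega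
      rw [he, Nat.choose_symm (by omega)]
    rw [h1, h2]
  rw [Finset.sum_congr rfl hcal, vandermonde_real (n+m) s (α - p), bin_eq_kk]
  congr 1
  have hc : (s:ℝ) = (m:ℝ) - p := by rw [hs, Nat.cast_sub h]
  push_cast
  rw [hc]; ring

lemma main_scalar (α x : ℝ) (n m : ℕ) :
    ∑ i ∈ range (m+1), kk (-α) i * x^i * ((n+m).choose (n+i) : ℝ) * (1-x)^(m-i)
      = ∑ i ∈ range (m+1), kk (α+(n:ℝ)+1) i * (1-x)^i * kk (-α) (m-i) := by
  have hx : ∀ i : ℕ, x^i = ∑ l ∈ range (i+1), (-1:ℝ)^l * (1-x)^l * (i.choose l : ℝ) := by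
    intro i
    have h0 := add_pow (x-1) 1 i
    rw [sub_add_cancel] at h0
    rw [h0]
    refine Finset.sum_congr rfl fun l _ => ?_
    rw [one_pow, mul_one]
    have : (x - 1) = -(1 - x) := by ring
    rw [this, neg_pow]
  calc
    ∑ i ∈ range (m+1), kk (-α) i * x^i * ((n+m).choose (n+i) : ℝ) * (1-x)^(m-i)
      = ∑ i ∈ range (m+1), ∑ l ∈ range (i+1),
          kk (-α) i * ((-1:ℝ)^l * (1-x)^l * (i.choose l : ℝ)) * ((n+m).choose (n+i) : ℝ)
            * (1-x)^(m-i) := by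
        refine Finset.sum_congr rfl fun i _ => ?_
        rw [hx i, Finset.mul_sum, Finset.sum_mul, Finset.sum_mul]
    _ = ∑ p ∈ range (m+1), ∑ q ∈ range (m-p+1),
          kk (-α) (p+q) * ((-1:ℝ)^q * (1-x)^q * ((p+q).choose q : ℝ))
            * ((n+m).choose (n+(p+q)) : ℝ) * (1-x)^(m-(p+q)) := by
        rw [Finset.sum_sigma', Finset.sum_sigma']
        refine Finset.sum_nbij' (fun a => ⟨a.1 - a.2, a.2⟩) (fun a => ⟨a.1 + a.2, a.2⟩)
          ?_ ?_ ?_ ?_ ?_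
        · rintro ⟨i, l⟩ hm
          simp only [Finset.mem_sigma, mem_range] at hm ⊢
          omega
        · rintro ⟨p, q⟩ hm
          simp only [Finset.mem_sigma, mem_range] at hm ⊢
          omega
        · rintro ⟨i, l⟩ hm
          simp only [Finset.mem_sigma, mem_range] at hm
          simp only [Sigma.mk.inj_iff]
          constructor
          · omega
          · exact HEq.rfl
        · rintro ⟨p, q⟩ hm
          simp only [Sigma.mk.inj_iff]
          constructor
          · omega
          · exact HEq.rfl
        · rintro ⟨i, l⟩ hm
          simp only [Finset.mem_sigma, mem_range] at hm
          have : i - l + l = i := by omega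
          rw [this]
    _ = ∑ p ∈ range (m+1), kk (-α) p * (1-x)^(m-p) * kk (α+(n:ℝ)+1) (m-p) := by
        refine Finset.sum_congr rfl fun p hp => ?_
        rw [mem_range] at hp
        have hstep : ∀ q ∈ range (m-p+1),
            kk (-α) (p+q) * ((-1:ℝ)^q * (1-x)^q * ((p+q).choose q : ℝ))
              * ((n+m).choose (n+(p+q)) : ℝ) * (1-x)^(m-(p+q))
            = (kk (-α) p * (1-x)^(m-p))
              * ((-1:ℝ)^q * kk ((p:ℝ) - α) q * ((n+m).choose (n+p+q) : ℝ)) := by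
          intro q hq
          rw [mem_range] at hq
          have hc1 : ((p+q).choose q : ℝ) = ((p+q).choose p : ℝ) := by
            rw [← Nat.choose_symm (Nat.le_add_right p q), Nat.add_sub_cancel_left]
          have hc2 : kk (-α) (p+q) * ((p+q).choose p : ℝ) = kk (-α) p * kk ((p:ℝ) - α) q := by
            have := kk_mul_choose (-α) (Nat.le_add_right p q)
            rw [Nat.add_sub_cancel_left] at this
            rw [this]
            congr 2
            ring
          have hpow : (1-x)^q * (1-x)^(m-(p+q)) = (1-x)^(m-p) := by
            rw [← pow_add]
            congr 1
            omega
          have hn : n + (p + q) = n + p + q := by omega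
          rw [hn]
          calc kk (-α) (p+q) * ((-1:ℝ)^q * (1-x)^q * ((p+q).choose q : ℝ))
                * ((n+m).choose (n+p+q) : ℝ) * (1-x)^(m-(p+q))
              = (kk (-α) (p+q) * ((p+q).choose q : ℝ))
                  * ((-1:ℝ)^q * ((n+m).choose (n+p+q) : ℝ))
                  * ((1-x)^q * (1-x)^(m-(p+q))) := by ring
            _ = (kk (-α) p * kk ((p:ℝ) - α) q)
                  * ((-1:ℝ)^q * ((n+m).choose (n+p+q) : ℝ)) * (1-x)^(m-p) := by
                rw [hc1, hc2, hpow]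
            _ = (kk (-α) p * (1-x)^(m-p))
                  * ((-1:ℝ)^q * kk ((p:ℝ) - α) q * ((n+m).choose (n+p+q) : ℝ)) := by ring
        rw [Finset.sum_congr rfl hstep, ← Finset.mul_sum, vander2 α n p m (by omega)]
    _ = ∑ i ∈ range (m+1), kk (α+(n:ℝ)+1) i * (1-x)^i * kk (-α) (m-i) := by
        rw [← Finset.sum_range_reflect]
        refine Finset.sum_congr rfl fun i hi => ?_
        rw [mem_range] at hi
        have h1 : m + 1 - 1 - i = m - i := by omega
        have h2 : m - (m - i) = i := by omega
        rw [h1, h2]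
        ring

lemma Gamma_add_nat (x : ℝ) (hx : 0 < x) (i : ℕ) :
    Real.Gamma (x + i) = Real.Gamma x * (ascPochhammer ℝ i).eval x := by
  induction i with
  | zero => simp
  | succ i ih =>
    have hpos : (0:ℝ) < x + i := by
      have : (0:ℝ) ≤ i := Nat.cast_nonneg i
      linarith
    have h1 : x + ((i+1 : ℕ) : ℝ) = (x + i) + 1 := by push_cast; ring
    rw [h1, Real.Gamma_add_one (ne_of_gt hpos), ih, ascPochhammer_succ_eval]
    ring

lemma gamma_ratio (α : ℝ) (hα : 0 ≤ α) (n i : ℕ) :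
    Real.Gamma ((n:ℝ) + i + α + 1) / (Real.Gamma ((n:ℝ) + α + 1) * Real.Gamma ((i:ℝ) + 1))
      = kk (α + n + 1) i := by
  have hx : (0:ℝ) < (n:ℝ) + α + 1 := by
    have : (0:ℝ) ≤ n := Nat.cast_nonneg n
    linarith
  have h1 : (n:ℝ) + i + α + 1 = ((n:ℝ) + α + 1) + i := by ring
  rw [h1, Gamma_add_nat _ hx i, Real.Gamma_nat_eq_factorial i, kk]
  have hG : Real.Gamma ((n:ℝ) + α + 1) ≠ 0 := ne_of_gt (Real.Gamma_pos_of_pos hx)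
  have hfac : ((i.factorial : ℝ)) ≠ 0 := by positivity
  have h2 : (α + (n:ℝ) + 1) = (n:ℝ) + α + 1 := by ring
  rw [h2]
  field_simp

lemma double_sum_reorg (N n : ℕ) (f : ℕ → ℂ) (hN : ∀ k ≥ N, f k = 0) (c : ℕ → ℕ → ℂ) :
    ∑ i ∈ range N, ∑ j ∈ range N, c i j * f (n+i+j)
      = ∑ m ∈ range N, (∑ i ∈ range (m+1), c i (m-i)) * f (n+m) := by
  rw [← Finset.sum_product']
  have hsub : Finset.filter (fun p : ℕ × ℕ => p.1 + p.2 < N) (range N ×ˢ range N)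
      ⊆ range N ×ˢ range N := Finset.filter_subset _ _
  rw [← Finset.sum_subset hsub]
  · have hrhs : ∀ m ∈ range N, (∑ i ∈ range (m+1), c i (m-i)) * f (n+m)
        = ∑ i ∈ range (m+1), c i (m-i) * f (n+m) := fun m _ => Finset.sum_mul _ _ _
    rw [Finset.sum_congr rfl hrhs, Finset.sum_sigma']
    refine Finset.sum_nbij' (fun p => ⟨p.1 + p.2, p.1⟩) (fun a => (a.2, a.1 - a.2)) ?_ ?_ ?_ ?_ ?_
    · rintro ⟨i, j⟩ hm
      simp only [Finset.mem_filter, Finset.mem_product, mem_range, Finset.mem_sigma] at hm ⊢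
      omega
    · rintro ⟨m, i⟩ hm
      simp only [Finset.mem_filter, Finset.mem_product, mem_range, Finset.mem_sigma] at hm ⊢
      omega
    · rintro ⟨i, j⟩ hm
      simp only [Prod.mk.injEq]
      exact ⟨trivial, by omega⟩
    · rintro ⟨m, i⟩ hm
      simp only [Finset.mem_sigma, mem_range] at hm
      simp only [Sigma.mk.inj_iff]
      constructor
      · omega
      · exact HEq.rfl
    · rintro ⟨i, j⟩ hm
      simp only [Finset.mem_filter, Finset.mem_product, mem_range] at hm
      have h1 : i + j - i = j := by omega
      have h2 : n + i + j = n + (i + j) := by omega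
      rw [h1, h2]
  · rintro ⟨i, j⟩ hm hnm
    simp only [Finset.mem_filter, Finset.mem_product, mem_range] at hm hnm
    have : f (n + i + j) = 0 := hN _ (by omega)
    rw [this, mul_zero]

/-- Lemma 4.3: commutation of `W^α` with the semigroup `S(t)`. -/
theorem stmt16 (α t : ℝ) (hα : 0 ≤ α) (ht : 0 ≤ t) (f : ℕ → ℂ)
    (hf : ∃ N, ∀ k ≥ N, f k = 0) (n : ℕ) :
    ∑' i : ℕ, (kk (-α) i : ℂ) * Sop t f (n + i)
    = (Real.exp (-t) : ℂ) ^ n *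
        ∑' i : ℕ,
          ((Real.Gamma (n + i + α + 1) /
              (Real.Gamma (n + α + 1) * Real.Gamma (i + 1)) : ℝ) : ℂ) *
            (1 - (Real.exp (-t) : ℂ)) ^ i *
            ∑' j : ℕ, (kk (-α) j : ℂ) * f (n + i + j) := by
  obtain ⟨N, hN⟩ := hf
  set X : ℂ := ((Real.exp (-t) : ℝ) : ℂ) with hX
  -- reduce Sop to a finite sum
  have hSop : ∀ M : ℕ, Sop t f M
      = X ^ M * ∑ j ∈ range N, ((M + j).choose M : ℂ) * (1 - X) ^ j * f (M + j) := by
    intro M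
    rw [Sop]
    have hin : (∑' j : ℕ, ((M + j).choose M : ℂ) * (1 - X) ^ j * f (M + j))
        = ∑ j ∈ range N, ((M + j).choose M : ℂ) * (1 - X) ^ j * f (M + j) := by
      refine tsum_eq_sum ?_
      intro j hj
      rw [mem_range, not_lt] at hj
      rw [hN (M + j) (by omega), mul_zero]
    rw [hin]
  have hSop0 : ∀ M : ℕ, N ≤ M → Sop t f M = 0 := by
    intro M hM
    rw [hSop M]
    have hz : ∀ j ∈ range N, ((M + j).choose M : ℂ) * (1 - X) ^ j * f (M + j) = 0 :=
      fun j _ => by rw [hN _ (by omega), mul_zero]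
    rw [Finset.sum_congr rfl hz, Finset.sum_const_zero, mul_zero]
  -- reduce LHS
  have hL : (∑' i : ℕ, (kk (-α) i : ℂ) * Sop t f (n + i))
      = ∑ i ∈ range N, (kk (-α) i : ℂ) * Sop t f (n + i) := by
    refine tsum_eq_sum ?_
    intro i hi
    rw [mem_range, not_lt] at hi
    rw [hSop0 (n + i) (by omega), mul_zero]
  -- inner W sums
  have hW : ∀ i : ℕ, (∑' j : ℕ, (kk (-α) j : ℂ) * f (n + i + j))
      = ∑ j ∈ range N, (kk (-α) j : ℂ) * f (n + i + j) := by
    intro i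
    refine tsum_eq_sum ?_
    intro j hj
    rw [mem_range, not_lt] at hj
    rw [hN _ (by omega), mul_zero]
  -- rewrite RHS outer summand
  have hR : (∑' i : ℕ,
      ((Real.Gamma (n + i + α + 1) / (Real.Gamma (n + α + 1) * Real.Gamma (i + 1)) : ℝ) : ℂ) *
        (1 - (Real.exp (-t) : ℂ)) ^ i * ∑' j : ℕ, (kk (-α) j : ℂ) * f (n + i + j))
      = ∑ i ∈ range N, (kk (α + n + 1) i : ℂ) * (1 - X) ^ i *
          ∑ j ∈ range N, (kk (-α) j : ℂ) * f (n + i + j) := by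
    have hcong : ∀ i : ℕ,
        ((Real.Gamma (n + i + α + 1) / (Real.Gamma (n + α + 1) * Real.Gamma (i + 1)) : ℝ) : ℂ) *
          (1 - (Real.exp (-t) : ℂ)) ^ i * ∑' j : ℕ, (kk (-α) j : ℂ) * f (n + i + j)
        = (kk (α + n + 1) i : ℂ) * (1 - X) ^ i *
            ∑ j ∈ range N, (kk (-α) j : ℂ) * f (n + i + j) := by
      intro i
      rw [gamma_ratio α hα n i, hW i]
    rw [tsum_congr hcong]
    refine tsum_eq_sum ?_
    intro i hi
    rw [mem_range, not_lt] at hi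
    have hz : ∀ j ∈ range N, (kk (-α) j : ℂ) * f (n + i + j) = 0 :=
      fun j _ => by rw [hN _ (by omega), mul_zero]
    rw [Finset.sum_congr rfl hz, Finset.sum_const_zero, mul_zero]
  rw [hL, hR]
  -- massage both sides to double sums
  have hLHS : ∑ i ∈ range N, (kk (-α) i : ℂ) * Sop t f (n + i)
      = ∑ i ∈ range N, ∑ j ∈ range N,
          ((kk (-α) i : ℂ) * X ^ (n + i) * ((n + i + j).choose (n + i) : ℂ) * (1 - X) ^ j)
            * f (n + i + j) := by
    refine Finset.sum_congr rfl fun i _ => ?_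
    rw [hSop (n + i), Finset.mul_sum, Finset.mul_sum]
    refine Finset.sum_congr rfl fun j _ => ?_
    ring
  have hRHS : (Real.exp (-t) : ℂ) ^ n *
        ∑ i ∈ range N, (kk (α + n + 1) i : ℂ) * (1 - X) ^ i *
          ∑ j ∈ range N, (kk (-α) j : ℂ) * f (n + i + j)
      = ∑ i ∈ range N, ∑ j ∈ range N,
          (X ^ n * (kk (α + n + 1) i : ℂ) * (1 - X) ^ i * (kk (-α) j : ℂ)) * f (n + i + j) := by
    rw [Finset.mul_sum]
    refine Finset.sum_congr rfl fun i _ => ?_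
    rw [Finset.mul_sum, Finset.mul_sum]
    refine Finset.sum_congr rfl fun j _ => ?_
    ring
  rw [hLHS, hRHS,
    double_sum_reorg N n f hN
      (fun i j => (kk (-α) i : ℂ) * X ^ (n + i) * ((n + i + j).choose (n + i) : ℂ) * (1 - X) ^ j),
    double_sum_reorg N n f hN
      (fun i j => X ^ n * (kk (α + n + 1) i : ℂ) * (1 - X) ^ i * (kk (-α) j : ℂ))]
  refine Finset.sum_congr rfl fun m _ => ?_
  congr 1
  -- per-coefficient identity
  have hms := main_scalar α (Real.exp (-t)) n m
  have hmsC : (∑ i ∈ range (m+1), (kk (-α) i : ℂ) * X ^ i * (((n+m).choose (n+i) : ℕ) : ℂ)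
        * (1 - X) ^ (m - i))
      = ∑ i ∈ range (m+1), (kk (α + (n:ℝ) + 1) i : ℂ) * (1 - X) ^ i * (kk (-α) (m - i) : ℂ) := by
    rw [hX]
    exact_mod_cast hms
  calc ∑ i ∈ range (m+1),
        (kk (-α) i : ℂ) * X ^ (n + i) * ((n + i + (m - i)).choose (n + i) : ℂ) * (1 - X) ^ (m - i)
      = ∑ i ∈ range (m+1),
          X ^ n * ((kk (-α) i : ℂ) * X ^ i * (((n+m).choose (n+i) : ℕ) : ℂ) * (1 - X) ^ (m - i)) := by
        refine Finset.sum_congr rfl fun i hi => ?_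
        rw [mem_range] at hi
        have h1 : n + i + (m - i) = n + m := by omega
        rw [h1, pow_add]
        ring
    _ = X ^ n * ∑ i ∈ range (m+1),
          (kk (-α) i : ℂ) * X ^ i * (((n+m).choose (n+i) : ℕ) : ℂ) * (1 - X) ^ (m - i) := by
        rw [Finset.mul_sum]
    _ = X ^ n * ∑ i ∈ range (m+1),
          (kk (α + (n:ℝ) + 1) i : ℂ) * (1 - X) ^ i * (kk (-α) (m - i) : ℂ) := by
        rw [hmsC]
    _ = ∑ i ∈ range (m+1),
          X ^ n * (kk (α + (n:ℝ) + 1) i : ℂ) * (1 - X) ^ i * (kk (-α) (m - i) : ℂ) := by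
        rw [Finset.mul_sum]
        refine Finset.sum_congr rfl fun i _ => ?_
        ring
end

section
/- Let α ≥ 0, t ≥ 0, and let f: ℕ₀ → ℂ be finitely supported. Define T(t)f(n) = ∑_{j=0}^n C(n,j) e^{-tj}(1-e^{-t})^{n-j} f(j) and W^α f(n) = ∑_{j=n}^∞ k^{-α}(j-n) f(j). Then W^α(T(t)f)(n) = e^{-tα} · T(t)(W^α f)(n) for every n ∈ ℕ₀. -/
open Finset

lemma kk_zero (γ : ℝ) : kk γ 0 = 1 := by simp [kk]

lemma kk_succ (γ : ℝ) (q : ℕ) : kk γ (q+1) = kk γ q * (γ + q) / (q+1) := by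
  have : (ascPochhammer ℝ (q+1)).eval γ = (ascPochhammer ℝ q).eval γ * (γ + q) := by
    rw [ascPochhammer_succ_right]; simp [Polynomial.eval_mul]
  rw [kk, kk, this, Nat.factorial_succ]
  push_cast
  rw [div_mul_eq_mul_div, div_div, mul_comm (Nat.cast q.factorial) ((q:ℝ)+1)]

lemma kk_nat (K q : ℕ) : kk (K+1 : ℝ) q = ((K + q).choose q : ℝ) := by
  induction q with
  | zero => simp [kk_zero]
  | succ q ih =>
    rw [kk_succ, ih]
    have hq : ((q:ℝ)+1) ≠ 0 := by positivity
    have h2 : ((K+q+1) * (K+q).choose q : ℝ) = ((K+q+1).choose (q+1) : ℝ) * (q+1) := by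
      exact_mod_cast congrArg (Nat.cast : ℕ → ℝ) (Nat.add_one_mul_choose_eq (K + q) q)
    rw [div_eq_iff hq]
    have h3 : K + (q+1) = K + q + 1 := by omega
    rw [h3]
    push_cast
    linear_combination h2

lemma kk_nonneg (c : ℝ) (hc : 0 ≤ c) (q : ℕ) : 0 ≤ kk c q := by
  induction q with
  | zero => simp [kk_zero]
  | succ q ih =>
    rw [kk_succ]
    positivity

lemma kk_abs_le (γ : ℝ) (c : ℝ) (hc : |γ| ≤ c) (q : ℕ) : |kk γ q| ≤ kk c q := by
  induction q with
  | zero => simp [kk_zero]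
  | succ q ih =>
    rw [kk_succ, kk_succ, abs_div, abs_mul]
    have h1 : |γ + q| ≤ c + q := by
      calc |γ + q| ≤ |γ| + q := by simpa using abs_add_le γ q
      _ ≤ c + q := by linarith
    have h2 : |((q:ℝ)+1)| = (q:ℝ)+1 := abs_of_pos (by positivity)
    rw [h2, div_le_div_iff_of_pos_right (by positivity)]
    exact mul_le_mul ih h1 (abs_nonneg _) (kk_nonneg c (le_trans (abs_nonneg _) hc) q)

/-- polynomial bound for the kernel -/
lemma kk_abs_le_pow (γ : ℝ) : ∃ (C : ℝ) (R : ℕ), 0 < C ∧ ∀ q, |kk γ q| ≤ C * (q+1)^R := by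
  set K := ⌈|γ|⌉₊ with hK
  refine ⟨((K:ℝ)+1)^K, K, by positivity, fun q => ?_⟩
  have h1 : |kk γ q| ≤ kk ((K:ℝ)+1) q := kk_abs_le γ _ ((Nat.le_ceil _).trans (by linarith)) q
  rw [kk_nat] at h1
  refine h1.trans ?_
  have h2 : (K + q).choose q = (K + q).choose K := by
    rw [← Nat.choose_symm (by omega)]
    congr 1
    omega
  have h3 : ((K+q).choose q : ℝ) ≤ ((K+q:ℕ):ℝ)^K := by
    rw [h2]; exact_mod_cast Nat.cast_le.2 (Nat.choose_le_pow (K+q) K)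
  refine h3.trans ?_
  have h4 : ((K+q:ℕ):ℝ) ≤ ((K:ℝ)+1) * ((q:ℝ)+1) := by push_cast; nlinarith [Nat.cast_nonneg (α := ℝ) K, Nat.cast_nonneg (α := ℝ) q]
  calc ((K+q:ℕ):ℝ)^K ≤ (((K:ℝ)+1) * ((q:ℝ)+1))^K := by
        apply pow_le_pow_left₀ (by positivity) h4
  _ = ((K:ℝ)+1)^K * ((q:ℝ)+1)^K := mul_pow _ _ _

lemma summable_aux (R : ℕ) {r : ℝ} (hr0 : 0 < r) (hr1 : r < 1) :
    Summable (fun q : ℕ => ((q:ℝ)+1)^R * r^q) := by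
  have h : Summable (fun n : ℕ => (n:ℝ)^R * r^n) :=
    summable_pow_mul_geometric_of_norm_lt_one R (by rw [Real.norm_eq_abs, abs_of_pos hr0]; exact hr1)
  have h2 : Summable (fun n : ℕ => ((n+1:ℕ):ℝ)^R * r^(n+1)) := (summable_nat_add_iff 1).2 h
  have h3 := h2.mul_left r⁻¹
  refine h3.congr fun q => ?_
  push_cast
  rw [pow_succ]
  field_simp

/-- summable bound for derivative-type terms -/
lemma summable_aux2 (C : ℝ) (R : ℕ) {r : ℝ} (hr0 : 0 < r) (hr1 : r < 1) :
    Summable (fun q : ℕ => C * ((q:ℝ)+1)^(R+1) * r^(q-1)) := by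
  set w : ℕ → ℝ := fun q => ((q:ℝ)+1)^(R+1) * r^(q-1) with hw
  have h : Summable (fun q : ℕ => ((q:ℝ)+1)^(R+1) * r^q) := summable_aux (R+1) hr0 hr1
  have h2 : Summable (fun q : ℕ => (2:ℝ)^(R+1) * (((q:ℝ)+1)^(R+1) * r^q)) := h.mul_left _
  have h3 : Summable (fun q : ℕ => (((q:ℝ)+1)+1)^(R+1) * r^q) := by
    refine h2.of_nonneg_of_le (fun q => by positivity) fun q => ?_
    rw [← mul_assoc, ← mul_pow]
    apply mul_le_mul_of_nonneg_right _ (by positivity)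
    apply pow_le_pow_left₀ (by positivity)
    linarith [Nat.cast_nonneg (α := ℝ) q]
  have h4 : Summable (fun q : ℕ => w (q+1)) := by
    refine h3.congr fun q => ?_
    simp only [hw, Nat.add_sub_cancel]
    push_cast
    ring
  have h5 : Summable w := (summable_nat_add_iff 1).1 h4
  exact (h5.mul_left C).congr fun q => by simp [hw]; ring

lemma kk_succ' (γ : ℝ) (q : ℕ) : kk γ (q+1) * (q+1) = kk γ q * (γ + q) := by
  rw [kk_succ]
  field_simp

/-- The binomial series. -/
lemma binom_series (γ : ℝ) {y : ℝ} (hy0 : 0 ≤ y) (hy1 : y < 1) :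
    HasSum (fun q : ℕ => kk γ q * y^q) ((1-y) ^ (-γ)) := by
  obtain ⟨C, R, hC, hCR⟩ := kk_abs_le_pow γ
  rcases eq_or_lt_of_le hy0 with h0 | hy0'
  · have : HasSum (fun q : ℕ => kk γ q * y^q) (kk γ 0 * y^0) := by
      apply hasSum_single
      intro q hq
      rw [← h0, zero_pow hq, mul_zero]
    simpa [kk_zero, ← h0] using this
  -- now 0 < y < 1
  set r : ℝ := (1+y)/2 with hr
  have hr0 : 0 < r := by rw [hr]; linarith
  have hr1 : r < 1 := by rw [hr]; linarith
  have hyr : y < r := by rw [hr]; linarith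
  set s : Set ℝ := Set.Ioo (-r) r with hs
  set g : ℕ → ℝ → ℝ := fun q z => kk γ q * z^q with hg
  set g' : ℕ → ℝ → ℝ := fun q z => kk γ q * (q * z^(q-1)) with hg'
  set u : ℕ → ℝ := fun q => C * ((q:ℝ)+1)^(R+1) * r^(q-1) with hu
  have hsu : Summable u := summable_aux2 C (R) hr0 hr1
  have hder : ∀ q z, z ∈ s → HasDerivAt (g q) (g' q z) z := by
    intro q z _
    exact (hasDerivAt_pow q z).const_mul (kk γ q)
  have hbound : ∀ q z, z ∈ s → ‖g' q z‖ ≤ u q := by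
    intro q z hz
    rw [hs, Set.mem_Ioo] at hz
    have hzr : |z| ≤ r := by rw [abs_le]; constructor <;> linarith [hz.1, hz.2]
    rw [hg', hu, Real.norm_eq_abs, abs_mul, abs_mul]
    have h1 : |kk γ q| ≤ C * ((q:ℝ)+1)^R := hCR q
    have h2 : |(q:ℝ)| ≤ (q:ℝ)+1 := by rw [abs_of_nonneg (Nat.cast_nonneg q)]; linarith
    have h3 : |z^(q-1)| ≤ r^(q-1) := by
      rw [abs_pow]; exact pow_le_pow_left₀ (abs_nonneg z) hzr _
    calc |kk γ q| * (|(q:ℝ)| * |z^(q-1)|)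
        ≤ (C * ((q:ℝ)+1)^R) * ((((q:ℝ)+1)) * r^(q-1)) := by
          apply mul_le_mul h1 (mul_le_mul h2 h3 (abs_nonneg _) (by linarith [Nat.cast_nonneg (α := ℝ) q])) (by positivity) (by positivity)
    _ = C * ((q:ℝ)+1)^(R+1) * r^(q-1) := by ring
  have h0s : (0:ℝ) ∈ s := by rw [hs]; constructor <;> [linarith; exact hr0]
  have hg0 : Summable (fun q => g q 0) := by
    apply summable_of_ne_finset_zero (s := {0})
    intro q hq
    simp only [mem_singleton] at hq
    rw [hg]
    simp [zero_pow hq]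
  -- summability of g and g' at every point of s
  have hsummg : ∀ z, |z| ≤ r → Summable (fun q => g q z) := by
    intro z hz
    refine Summable.of_norm ?_
    refine Summable.of_nonneg_of_le (fun q => norm_nonneg _) (fun q => ?_)
      ((summable_aux R hr0 hr1).mul_left C)
    rw [hg, Real.norm_eq_abs, abs_mul, abs_pow]
    calc |kk γ q| * |z|^q ≤ (C * ((q:ℝ)+1)^R) * r^q := by
          apply mul_le_mul (hCR q) (pow_le_pow_left₀ (abs_nonneg z) hz q) (by positivity) (by positivity)
    _ = C * (((q:ℝ)+1)^R * r^q) := by ring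
  have hsummg' : ∀ z, z ∈ s → Summable (fun q => g' q z) := by
    intro z hz
    refine Summable.of_norm (Summable.of_nonneg_of_le (fun q => norm_nonneg _)
      (fun q => hbound q z hz) hsu)
  -- the sum function and its derivative
  set G : ℝ → ℝ := fun z => ∑' q, g q z with hG
  set D : ℝ → ℝ := fun z => ∑' q, g' q z with hD
  have hGder : ∀ z ∈ s, HasDerivAt G (D z) z := by
    intro z hz
    exact hasDerivAt_tsum_of_isPreconnected hsu isOpen_Ioo
      ((convex_Ioo _ _).isPreconnected) hder hbound h0s hg0 hz
  -- the ODE : (1-z) * D z = γ * G z on s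
  have hODE : ∀ z ∈ s, (1-z) * D z = γ * G z := by
    intro z hz
    have hzr : |z| ≤ r := by
      rw [hs, Set.mem_Ioo] at hz
      rw [abs_le]; constructor <;> linarith [hz.1, hz.2]
    have hsg := (hsummg z hzr).hasSum
    have hsd := (hsummg' z hz).hasSum
    have hshift : HasSum (fun q => g' (q+1) z) (D z) := by
      have := (hasSum_nat_add_iff' (f := fun q => g' q z) 1).2 hsd
      simpa [hg'] using this
    have hterm : ∀ q : ℕ, g' (q+1) z = γ * g q z + z * g' q z := by
      intro q
      rcases Nat.eq_zero_or_pos q with h | h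
      · subst h
        simp [hg, hg', kk_succ, kk_zero]
      · obtain ⟨p, rfl⟩ := Nat.exists_eq_succ_of_ne_zero h.ne'
        simp only [hg, hg', Nat.add_sub_cancel]
        have := kk_succ' γ (p+1)
        push_cast at this ⊢
        calc kk γ (p+1+1) * (((p:ℝ)+1+1) * z^(p+1)) = (kk γ (p+1+1) * ((p:ℝ)+1+1)) * z^(p+1) := by ring
        _ = (kk γ (p+1) * (γ + ((p:ℝ)+1))) * z^(p+1) := by rw [this]
        _ = γ * (kk γ (p+1) * z^(p+1)) + z * (kk γ (p+1) * (((p:ℝ)+1) * z^(p+1-1))) := by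
            rw [Nat.add_sub_cancel]
            ring
    have h2 : HasSum (fun q => γ * g q z + z * g' q z) (γ * G z + z * D z) :=
      (hsg.mul_left γ).add (hsd.mul_left z)
    have heq : (fun q => g' (q+1) z) = fun q => γ * g q z + z * g' q z := funext hterm
    rw [heq] at hshift
    have h3 : D z = γ * G z + z * D z := hshift.unique h2
    linarith [h3]
  -- the combined function h z = (1-z)^γ * G z has zero derivative on s
  set h : ℝ → ℝ := fun z => (1-z) ^ γ * G z with hh
  have hhder : ∀ z ∈ s, HasDerivAt h 0 z := by
    intro z hz
    have hz1 : 0 < 1 - z := by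
      rw [hs, Set.mem_Ioo] at hz
      linarith [hz.2]
    have hrp : HasDerivAt (fun w : ℝ => (1-w) ^ γ) (γ * (1-z) ^ (γ-1) * (-1)) z := by
      have inner : HasDerivAt (fun w : ℝ => 1 - w) (-1) z := by
        simpa using (hasDerivAt_id z).const_sub 1
      exact (Real.hasDerivAt_rpow_const (p := γ) (Or.inl hz1.ne')).comp z inner
    have hprod := hrp.mul (hGder z hz)
    have hval : γ * (1-z) ^ (γ-1) * (-1) * G z + (1-z) ^ γ * D z = 0 := by
      have hsplit : (1-z) ^ γ = (1-z) ^ (γ-1) * (1-z) := by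
        rw [← Real.rpow_add_one hz1.ne' (γ-1)]
        norm_num
      rw [hsplit]
      have := hODE z hz
      calc γ * (1-z) ^ (γ-1) * (-1) * G z + (1-z) ^ (γ-1) * (1-z) * D z
          = (1-z) ^ (γ-1) * ((1-z) * D z - γ * G z) := by ring
      _ = 0 := by rw [this]; ring
    rw [← hval]
    exact hprod
  -- MVT on [0,y]
  have hys : y ∈ s := by rw [hs]; constructor <;> [linarith; exact hyr]
  have hIccs : Set.Icc (0:ℝ) y ⊆ s := by
    intro z hz
    rw [hs, Set.mem_Ioo]
    rcases hz with ⟨h1, h2⟩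
    constructor <;> linarith
  have hcont : ContinuousOn h (Set.Icc 0 y) := by
    intro z hz
    exact ((hhder z (hIccs hz)).continuousAt).continuousWithinAt
  obtain ⟨c, hc, hc2⟩ := exists_hasDerivAt_eq_slope h (fun _ => (0:ℝ)) hy0' hcont
    (fun z hz => hhder z (hIccs (Set.mem_Icc_of_Ioo hz)))
  -- conclude h y = h 0
  have hslope : h y = h 0 := by
    have : (h y - h 0) / (y - 0) = 0 := hc2.symm
    rw [div_eq_zero_iff] at this
    rcases this with h1 | h1
    · linarith [sub_eq_zero.1 (by linarith [h1] : h y - h 0 = 0)]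
    · exfalso; rw [sub_zero] at h1; exact hy0'.ne' h1
  -- compute h 0 = 1
  have hG0 : G 0 = 1 := by
    have : HasSum (fun q : ℕ => g q 0) (g 0 0) := by
      apply hasSum_single
      intro q hq
      rw [hg]
      simp [zero_pow hq]
    exact this.tsum_eq.trans (by simp [hg, kk_zero])
  have hh0 : h 0 = 1 := by
    have h1 : h 0 = (1-0) ^ γ * G 0 := rfl
    rw [h1, hG0]
    simp
  -- conclude
  have hy1' : (0:ℝ) < 1 - y := by linarith
  have hGy : G y = (1-y) ^ (-γ) := by
    have h1 : (1-y) ^ γ * G y = 1 := by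
      rw [show (1-y) ^ γ * G y = h y from rfl, hslope, hh0]
    rw [Real.rpow_neg (le_of_lt hy1')]
    exact (inv_eq_of_mul_eq_one_right h1).symm
  have hyabs : |y| ≤ r := by rw [abs_of_nonneg hy0]; exact le_of_lt hyr
  have := (hsummg y hyabs).hasSum
  rw [show (∑' q, g q y) = G y from rfl, hGy] at this
  exact this

lemma kk_mul (γ : ℝ) (p q : ℕ) :
    kk γ (p+q) * ((p+q).choose p : ℝ) = kk γ p * kk (γ+p) q := by
  have hasc : (ascPochhammer ℝ (p+q)).eval γ
      = (ascPochhammer ℝ p).eval γ * (ascPochhammer ℝ q).eval (γ + p) := by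
    rw [← ascPochhammer_mul]
    simp [Polynomial.eval_mul, Polynomial.eval_comp]
  have hch : ((p+q).choose p : ℝ) * (p.factorial : ℝ) * (q.factorial : ℝ) = ((p+q).factorial : ℝ) := by
    have hn := Nat.choose_mul_factorial_mul_factorial (Nat.le_add_right p q)
    rw [Nat.add_sub_cancel_left] at hn
    exact_mod_cast congrArg (Nat.cast : ℕ → ℝ) hn
  unfold kk
  have h1 : ((p+q).factorial : ℝ) ≠ 0 := by exact_mod_cast (p+q).factorial_ne_zero
  have h2 : ((p).factorial : ℝ) ≠ 0 := by exact_mod_cast (p).factorial_ne_zero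
  have h3 : ((q).factorial : ℝ) ≠ 0 := by exact_mod_cast (q).factorial_ne_zero
  rw [hasc, div_mul_div_comm, div_mul_eq_mul_div, div_eq_div_iff h1 (by positivity)]
  linear_combination (Polynomial.eval γ (ascPochhammer ℝ p) * Polynomial.eval (γ + (p:ℝ)) (ascPochhammer ℝ q)) * hch

lemma binom_series' (γ : ℝ) (p : ℕ) {y : ℝ} (hy0 : 0 ≤ y) (hy1 : y < 1) :
    HasSum (fun i : ℕ => kk γ i * (i.choose p : ℝ) * y^(i-p)) (kk γ p * (1-y) ^ (-γ-p)) := by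
  have base := (binom_series (γ+p) hy0 hy1).mul_left (kk γ p)
  have hterm : ∀ q : ℕ, kk γ p * (kk (γ+p) q * y^q) = kk γ (q+p) * ((q+p).choose p : ℝ) * y^((q+p)-p) := by
    intro q
    rw [Nat.add_sub_cancel, add_comm q p, kk_mul]
    ring
  rw [funext hterm] at base
  have hzero : ∀ i ∈ range p, kk γ i * (i.choose p : ℝ) * y^(i-p) = 0 := by
    intro i hi
    rw [mem_range] at hi
    rw [Nat.choose_eq_zero_of_lt hi]
    simp
  rw [show -(γ+(p:ℝ)) = -γ-(p:ℝ) by ring] at base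
  have h2 := (hasSum_nat_add_iff' (f := fun i => kk γ i * (i.choose p : ℝ) * y^(i-p)) p
    (g := kk γ p * (1-y) ^ (-γ-(p:ℝ))))
  rw [sum_eq_zero hzero, sub_zero] at h2
  exact h2.1 base

lemma choose_pow_split (n i j : ℕ) {y : ℝ} :
    ((n+i).choose j : ℝ) * y^(n+i-j)
      = ∑ p ∈ range (j+1), (n.choose (j-p) : ℝ) * y^(n-(j-p)) * ((i.choose p : ℝ) * y^(i-p)) := by
  have hv : ((i+n).choose j : ℝ) = ∑ p ∈ range (j+1), (i.choose p : ℝ) * (n.choose (j-p) : ℝ) := by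
    have := Nat.add_choose_eq i n j
    rw [Finset.Nat.sum_antidiagonal_eq_sum_range_succ_mk] at this
    exact_mod_cast congrArg (Nat.cast : ℕ → ℝ) this
  rw [show n+i = i+n by omega, hv, sum_mul]
  apply sum_congr rfl
  intro p hp
  rw [mem_range] at hp
  by_cases hpi : p ≤ i
  · by_cases hjn : j - p ≤ n
    · have : i + n - j = (n - (j-p)) + (i-p) := by omega
      rw [this, pow_add]
      ring
    · rw [Nat.choose_eq_zero_of_lt (by omega : n < j - p)]
      simp
  · rw [Nat.choose_eq_zero_of_lt (by omega : i < p)]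
    simp

lemma key3 (γ : ℝ) (n j : ℕ) {y : ℝ} (hy0 : 0 ≤ y) (hy1 : y < 1) :
    HasSum (fun i : ℕ => kk γ i * (((n+i).choose j : ℝ) * y^(n+i-j)))
      (∑ p ∈ range (j+1), (n.choose (j-p) : ℝ) * y^(n-(j-p)) * (kk γ p * (1-y) ^ (-γ-(p:ℝ)))) := by
  have h1 : ∀ i : ℕ, kk γ i * (((n+i).choose j : ℝ) * y^(n+i-j))
      = ∑ p ∈ range (j+1), (n.choose (j-p) : ℝ) * y^(n-(j-p)) * (kk γ i * ((i.choose p : ℝ) * y^(i-p))) := by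
    intro i
    rw [choose_pow_split n i j, mul_sum]
    apply sum_congr rfl
    intro p _
    ring
  rw [funext h1]
  apply hasSum_sum
  intro p _
  have h := (binom_series' γ p hy0 hy1).mul_left ((n.choose (j-p) : ℝ) * y^(n-(j-p)))
  have he : (fun i => (n.choose (j-p) : ℝ) * y^(n-(j-p)) * (kk γ i * ((i.choose p : ℝ) * y^(i-p))))
      = fun i => (n.choose (j-p) : ℝ) * y^(n-(j-p)) * (kk γ i * (i.choose p : ℝ) * y^(i-p)) := by
    funext i; ring
  rw [he]
  exact h

lemma double_sum {M n N : ℕ} (G : ℕ → ℕ → ℂ) (hG1 : ∀ a b, n < a → G a b = 0)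
    (hG2 : ∀ a b, N ≤ a + b → G a b = 0) (hn : n < M) (hN : N ≤ M) :
    ∑ j ∈ range M, ∑ p ∈ range (j+1), G (j-p) p = ∑ a ∈ range (n+1), ∑ b ∈ range M, G a b := by
  have h1 : ∀ j, ∑ p ∈ range (j+1), G (j-p) p = ∑ a ∈ range (j+1), G a (j-a) := by
    intro j
    rw [← Finset.sum_range_reflect (fun a => G a (j-a)) (j+1)]
    apply sum_congr rfl
    intro p hp
    rw [mem_range] at hp
    congr 1 <;> omega
  simp only [h1]
  have h2 : ∑ j ∈ range M, ∑ a ∈ range (j+1), G a (j-a)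
      = ∑ a ∈ range M, ∑ j ∈ Ico a M, G a (j-a) := by
    simp only [range_eq_Ico]
    rw [← Finset.sum_Ico_Ico_comm 0 M (fun a j => G a (j-a))]
  rw [h2]
  have h3 : ∀ a, a < M → ∑ j ∈ Ico a M, G a (j-a) = ∑ b ∈ range M, G a b := by
    intro a ha
    rw [Finset.sum_Ico_eq_sum_range]
    have e1 : ∀ b, G a (a + b - a) = G a b := by intro b; congr 1; omega
    simp only [e1]
    apply Finset.sum_subset
    · apply Finset.range_subset_range.2; omega
    · intro b _ hb
      rw [mem_range, not_lt] at hb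
      exact hG2 a b (by omega)
  rw [Finset.sum_congr rfl (fun a ha => h3 a (mem_range.1 ha))]
  symm
  apply Finset.sum_subset
  · apply Finset.range_subset_range.2; omega
  · intro a _ ha
    rw [mem_range, not_lt] at ha
    exact Finset.sum_eq_zero fun b _ => hG1 a b (by omega)

lemma Tsem_zero (g : ℕ → ℂ) (k : ℕ) : Tsem 0 g k = g k := by
  unfold Tsem
  rw [Finset.sum_eq_single k]
  · simp
  · intro j hj hjk
    rw [mem_range] at hj
    have h2 : k - j ≠ 0 := by omega
    simp [Real.exp_zero, zero_pow h2]
  · intro hk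
    exact absurd (self_mem_range_succ k) hk

/-- Lemma 4.4: `W^α T(t) f = e^{-tα} T(t) W^α f`. -/
theorem stmt17 (α t : ℝ) (hα : 0 ≤ α) (ht : 0 ≤ t) (f : ℕ → ℂ)
    (hf : ∃ N, ∀ k ≥ N, f k = 0) (n : ℕ) :
    ∑' i : ℕ, (kk (-α) i : ℂ) * Tsem t f (n + i)
    = (Real.exp (-(t * α)) : ℂ) *
        Tsem t (fun k => ∑' i : ℕ, (kk (-α) i : ℂ) * f (k + i)) n := by
  obtain ⟨N, hN⟩ := hf
  rcases eq_or_lt_of_le ht with h0 | ht'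
  · subst h0
    simp only [Tsem_zero]
    norm_num
  -- t > 0 from here on
  set x := Real.exp (-t) with hxdef
  have hx0 : 0 < x := Real.exp_pos _
  have hx1 : x < 1 := by
    rw [hxdef, show (1:ℝ) = Real.exp 0 by simp]
    exact Real.exp_lt_exp.2 (by linarith)
  set y : ℝ := 1 - x with hydef
  have hy0 : 0 < y := by rw [hydef]; linarith
  have hy1 : y < 1 := by rw [hydef]; linarith
  set M := N + n + 1 with hMdef
  have hbase : (1 - (x:ℂ)) = ((y:ℝ):ℂ) := by rw [hydef]; push_cast; ring
  -- step A : rewrite Tsem with a fixed range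
  have hTsem : ∀ i : ℕ, Tsem t f (n+i)
      = ∑ j ∈ range M, ((n+i).choose j : ℂ) * (x:ℂ)^j * ((y:ℝ):ℂ)^(n+i-j) * f j := by
    intro i
    unfold Tsem
    simp only [← hxdef, hbase]
    have e1 : ∑ j ∈ range (n+i+1), ((n+i).choose j : ℂ) * (x:ℂ)^j * ((y:ℝ):ℂ)^(n+i-j) * f j
        = ∑ j ∈ range (M+(n+i+1)), ((n+i).choose j : ℂ) * (x:ℂ)^j * ((y:ℝ):ℂ)^(n+i-j) * f j := by
      apply Finset.sum_subset (Finset.range_subset_range.2 (by omega))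
      intro j _ hj2
      rw [mem_range, not_lt] at hj2
      rw [Nat.choose_eq_zero_of_lt (by omega)]
      simp
    have e2 : ∑ j ∈ range M, ((n+i).choose j : ℂ) * (x:ℂ)^j * ((y:ℝ):ℂ)^(n+i-j) * f j
        = ∑ j ∈ range (M+(n+i+1)), ((n+i).choose j : ℂ) * (x:ℂ)^j * ((y:ℝ):ℂ)^(n+i-j) * f j := by
      apply Finset.sum_subset (Finset.range_subset_range.2 (by omega))
      intro j _ hj2
      rw [mem_range, not_lt] at hj2
      rw [hN j (by omega)]
      simp
    rw [e1, ← e2]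
  -- step B : HasSum for each j
  set Sv : ℕ → ℝ := fun j => ∑ p ∈ range (j+1),
      (n.choose (j-p) : ℝ) * y^(n-(j-p)) * (kk (-α) p * (1-y) ^ (-(-α)-(p:ℝ))) with hSvdef
  have hB : ∀ j, HasSum
      (fun i => (kk (-α) i : ℂ) * (((n+i).choose j : ℂ) * (x:ℂ)^j * ((y:ℝ):ℂ)^(n+i-j) * f j))
      (((Sv j : ℝ):ℂ) * ((x:ℂ)^j * f j)) := by
    intro j
    have hkey : HasSum (fun i => ((kk (-α) i * (((n+i).choose j : ℝ) * y^(n+i-j)) : ℝ) : ℂ))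
        (((Sv j : ℝ) : ℂ)) := Complex.hasSum_ofReal.2 (key3 (-α) n j hy0.le hy1)
    have h := hkey.mul_right ((x:ℂ)^j * f j)
    have he : (fun i => ((kk (-α) i * (((n+i).choose j : ℝ) * y^(n+i-j)) : ℝ) : ℂ) * ((x:ℂ)^j * f j))
        = fun i => (kk (-α) i : ℂ) * (((n+i).choose j : ℂ) * (x:ℂ)^j * ((y:ℝ):ℂ)^(n+i-j) * f j) := by
      funext i
      push_cast
      ring
    rw [he] at h
    exact h
  -- step C : HasSum for the full left side
  have hC : HasSum (fun i => (kk (-α) i : ℂ) * Tsem t f (n+i))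
      (∑ j ∈ range M, ((Sv j : ℝ):ℂ) * ((x:ℂ)^j * f j)) := by
    have H := hasSum_sum (fun j (_ : j ∈ range M) => hB j)
    have he2 : (fun i => ∑ j ∈ range M,
          (kk (-α) i : ℂ) * (((n+i).choose j : ℂ) * (x:ℂ)^j * ((y:ℝ):ℂ)^(n+i-j) * f j))
        = fun i => (kk (-α) i : ℂ) * Tsem t f (n+i) := by
      funext i
      rw [hTsem i, mul_sum]
    rw [he2] at H
    exact H
  rw [hC.tsum_eq]
  -- step D : the right-hand side
  have hg : ∀ k, (∑' i, (kk (-α) i : ℂ) * f (k+i)) = ∑ i ∈ range M, (kk (-α) i : ℂ) * f (k+i) := by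
    intro k
    apply tsum_eq_sum
    intro b hb
    rw [mem_range, not_lt] at hb
    rw [hN (k+b) (by omega), mul_zero]
  have hexp : (Real.exp (-(t*α)) : ℂ) = ((x ^ α : ℝ) : ℂ) := by
    rw [hxdef, Real.rpow_def_of_pos (Real.exp_pos _), Real.log_exp]
    norm_num [mul_comm]
  rw [hexp]
  unfold Tsem
  simp only [← hxdef, hbase, hg]
  -- step E : final computation
  set G : ℕ → ℕ → ℂ := fun a b =>
    (n.choose a : ℂ) * (x:ℂ)^a * ((y:ℝ):ℂ)^(n-a) * ((kk (-α) b : ℝ):ℂ) * f (a+b) with hGdef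
  have hSv : ∀ j, ((Sv j : ℝ):ℂ) * ((x:ℂ)^j * f j)
      = ((x ^ α : ℝ):ℂ) * ∑ p ∈ range (j+1), G (j-p) p := by
    intro j
    have hreal : ∀ p, p ∈ range (j+1) →
        (n.choose (j-p) : ℝ) * y^(n-(j-p)) * (kk (-α) p * (1-y) ^ (-(-α)-(p:ℝ))) * x^j
        = x ^ α * ((n.choose (j-p) : ℝ) * x^(j-p) * y^(n-(j-p)) * kk (-α) p) := by
      intro p hp
      rw [mem_range] at hp
      have h1y : (1:ℝ) - y = x := by rw [hydef]; ring
      have hxj : (x:ℝ)^j = x ^ ((j:ℝ)) := (Real.rpow_natCast x j).symm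
      have hxjp : (x:ℝ)^(j-p) = x ^ (((j-p:ℕ)):ℝ) := (Real.rpow_natCast x (j-p)).symm
      have hee : -(-α)-(p:ℝ) + (j:ℝ) = α + ((j-p : ℕ):ℝ) := by
        rw [Nat.cast_sub (by omega)]
        ring
      have hxx : x ^ (-(-α)-(p:ℝ)) * x ^ ((j:ℝ)) = x ^ α * x ^ (((j-p:ℕ)):ℝ) := by
        rw [← Real.rpow_add hx0, ← Real.rpow_add hx0, hee]
      rw [h1y, hxj, hxjp]
      linear_combination ((n.choose (j-p) : ℝ) * y^(n-(j-p)) * kk (-α) p) * hxx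
    have : (Sv j) * x^j = x ^ α * ∑ p ∈ range (j+1),
        ((n.choose (j-p) : ℝ) * x^(j-p) * y^(n-(j-p)) * kk (-α) p) := by
      rw [hSvdef]
      simp only [sum_mul, mul_sum]
      exact Finset.sum_congr rfl hreal
    calc ((Sv j : ℝ):ℂ) * ((x:ℂ)^j * f j) = (((Sv j * x^j : ℝ)):ℂ) * f j := by push_cast; ring
    _ = ((x ^ α : ℝ):ℂ) * (∑ p ∈ range (j+1),
          (((n.choose (j-p) : ℝ) * x^(j-p) * y^(n-(j-p)) * kk (-α) p : ℝ):ℂ)) * f j := by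
        rw [this]; push_cast; try ring
    _ = ((x ^ α : ℝ):ℂ) * ∑ p ∈ range (j+1), G (j-p) p := by
        rw [mul_assoc, sum_mul]
        congr 1
        apply Finset.sum_congr rfl
        intro p hp
        rw [mem_range] at hp
        simp only [hGdef]
        have hf : f ((j-p)+p) = f j := by congr 1; omega
        push_cast
        try rw [hf]
        try ring
  simp only [hSv]
  rw [← mul_sum]
  congr 1
  have hRHS : ∀ a, a ∈ range (n+1) →
      (n.choose a : ℂ) * (x:ℂ)^a * ((y:ℝ):ℂ)^(n-a) * (∑ i ∈ range M, (kk (-α) i : ℂ) * f (a+i))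
      = ∑ b ∈ range M, G a b := by
    intro a _
    rw [mul_sum]
    apply Finset.sum_congr rfl
    intro b _
    simp only [hGdef]
    push_cast
    ring
  rw [Finset.sum_congr rfl hRHS]
  apply double_sum (N := N) G
  · intro a b hab
    simp [hGdef, Nat.choose_eq_zero_of_lt hab]
  · intro a b hab
    simp [hGdef, hN (a+b) hab]
  · omega
  · omega
end

section
/- Let β ∈ ℂ with Re β > 0 and n ∈ ℕ₀, and let k^γ denote the Cesàro kernel. For any sequence f: ℕ₀ → ℂ, the generalized Cesàro operator satisfies the subordination formula (1/k^{β+1}(n)) ∑_{j=0}^n k^β(n-j) f(j) = β ∫_0^∞ (1-e^{-t})^{β-1} e^{-t} ∑_{j=0}^n C(n,j) e^{-tj}(1-e^{-t})^{n-j} f(j) dt. -/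
/-! Substituting `x = 1 - e^{-t}` (so `dx = e^{-t} dt`) turns the `j`-th term of the expanded
integrand into the Beta integral `B(n - j + β, j + 1) = Γ(n - j + β) j! / Γ(n + β + 1)`, and
`β C(n, j) B(n - j + β, j + 1) = k^β(n - j) / k^{β+1}(n)` by `Γ(β + 1) = β Γ(β)`. -/

open MeasureTheory

/-- The Cesàro kernel of complex order. -/
noncomputable def cK (γ : ℂ) (k : ℕ) : ℂ :=
  Complex.Gamma (k + γ) / (Complex.Gamma γ * Complex.Gamma (k + 1))

open Set
open scoped Nat

lemma hasDerivAt_one_sub_exp_neg (t : ℝ) :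
    HasDerivAt (fun t : ℝ => 1 - Real.exp (-t)) (Real.exp (-t)) t := by
  simpa using ((Real.hasDerivAt_exp (-t)).comp t (hasDerivAt_neg t)).const_sub 1

lemma strictMono_one_sub_exp_neg : StrictMono fun t : ℝ => 1 - Real.exp (-t) :=
  fun _ _ h => sub_lt_sub_left (Real.exp_lt_exp.2 (neg_lt_neg h)) 1

lemma image_one_sub_exp_neg_Ioi : (fun t : ℝ => 1 - Real.exp (-t)) '' Ioi 0 = Ioo 0 1 := by
  ext x
  constructor
  · rintro ⟨t, ht, rfl⟩
    have : Real.exp (-t) < 1 := Real.exp_lt_one_iff.2 (neg_neg_of_pos ht)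
    exact ⟨by linarith, by linarith [Real.exp_pos (-t)]⟩
  · rintro ⟨h0, h1⟩
    refine ⟨-Real.log (1 - x), neg_pos.2 (Real.log_neg (by linarith) (by linarith)), ?_⟩
    simp [Real.exp_log (by linarith : 0 < 1 - x)]

lemma abs_exp_neg_smul_betaIntegrand (u v : ℂ) (t : ℝ) :
    |Real.exp (-t)| • (((1 - Real.exp (-t) : ℝ) : ℂ) ^ (u - 1) *
        (1 - ((1 - Real.exp (-t) : ℝ) : ℂ)) ^ (v - 1))
      = ((1 - Real.exp (-t) : ℝ) : ℂ) ^ (u - 1) * (Real.exp (-t) : ℂ) ^ v := by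
  have hne : (Real.exp (-t) : ℂ) ≠ 0 := Complex.ofReal_ne_zero.2 (Real.exp_pos _).ne'
  rw [abs_of_pos (Real.exp_pos _), Complex.real_smul, Complex.ofReal_sub, Complex.ofReal_one,
    sub_sub_cancel, Complex.cpow_sub _ _ hne, Complex.cpow_one]
  field_simp

lemma integrableOn_one_sub_exp_neg_cpow_mul_exp_neg_cpow {u v : ℂ} (hu : 0 < u.re)
    (hv : 0 < v.re) :
    IntegrableOn (fun t : ℝ => ((1 - Real.exp (-t) : ℝ) : ℂ) ^ (u - 1) * (Real.exp (-t) : ℂ) ^ v)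
      (Ioi 0) := by
  have h := Complex.betaIntegral_convergent hu hv
  rw [intervalIntegrable_iff_integrableOn_Ioo_of_le zero_le_one, ← image_one_sub_exp_neg_Ioi,
    integrableOn_image_iff_integrableOn_abs_deriv_smul measurableSet_Ioi
      (fun t _ => (hasDerivAt_one_sub_exp_neg t).hasDerivWithinAt)
      strictMono_one_sub_exp_neg.injective.injOn] at h
  exact h.congr_fun (fun t _ => abs_exp_neg_smul_betaIntegrand u v t) measurableSet_Ioi

lemma integral_one_sub_exp_neg_cpow_mul_exp_neg_cpow (u v : ℂ) :
    ∫ t in Ioi (0 : ℝ), ((1 - Real.exp (-t) : ℝ) : ℂ) ^ (u - 1) * (Real.exp (-t) : ℂ) ^ v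
      = Complex.betaIntegral u v := by
  rw [Complex.betaIntegral, intervalIntegral.integral_of_le zero_le_one,
    integral_Ioc_eq_integral_Ioo, ← image_one_sub_exp_neg_Ioi,
    integral_image_eq_integral_abs_deriv_smul measurableSet_Ioi
      (fun t _ => (hasDerivAt_one_sub_exp_neg t).hasDerivWithinAt)
      strictMono_one_sub_exp_neg.injective.injOn]
  exact setIntegral_congr_fun measurableSet_Ioi
    (fun t _ => (abs_exp_neg_smul_betaIntegrand u v t).symm)

lemma natCast_add_re_pos {z : ℂ} (hz : 0 < z.re) (m : ℕ) : 0 < ((m : ℂ) + z).re := by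
  rw [Complex.add_re, Complex.natCast_re]
  positivity

lemma cK_sub_div_cK_add_one {β : ℂ} (hβ : 0 < β.re) {n j : ℕ} (hj : j ≤ n) :
    cK β (n - j) / cK (β + 1) n
      = β * (n.choose j * Complex.betaIntegral ((n - j : ℕ) + β) (j + 1)) := by
  have hm := natCast_add_re_pos hβ (n - j)
  have hj1 := natCast_add_re_pos (z := 1) one_pos j
  have hsum : ((n - j : ℕ) : ℂ) + β + (j + 1) = n + (β + 1) := by push_cast [hj]; ring
  have hβ0 : β ≠ 0 := fun h => by simp [h] at hβ
  have hΓβ := Complex.Gamma_ne_zero_of_re_pos hβ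
  have hΓn : Complex.Gamma (n + (β + 1)) ≠ 0 := Complex.Gamma_ne_zero_of_re_pos
    (natCast_add_re_pos (by simpa using hβ.trans (lt_add_one _)) n)
  have hchoose : (n.choose j : ℂ) * j ! * (n - j)! = n ! := by
    exact_mod_cast Nat.choose_mul_factorial_mul_factorial hj
  have hfact : ((n - j)! : ℂ) ≠ 0 := Nat.cast_ne_zero.2 (Nat.factorial_ne_zero _)
  rw [Complex.betaIntegral_eq_Gamma_mul_div _ _ hm hj1, hsum, cK, cK,
    Complex.Gamma_add_one β hβ0, Complex.Gamma_nat_eq_factorial, Complex.Gamma_nat_eq_factorial,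
    Complex.Gamma_nat_eq_factorial]
  field_simp
  linear_combination -Complex.Gamma ((n - j : ℕ) + β) * hchoose

/-- Subordination formula for the generalized Cesàro operator `C_β`. -/
theorem stmt19 (β : ℂ) (hβ : 0 < β.re) (n : ℕ) (f : ℕ → ℂ) :
    (1 / cK (β + 1) n) * ∑ j ∈ Finset.range (n + 1), cK β (n - j) * f j
    = β * ∫ t in Set.Ioi (0 : ℝ),
        ((1 - Real.exp (-t) : ℝ) : ℂ) ^ (β - 1) * (Real.exp (-t) : ℂ) *
          ∑ j ∈ Finset.range (n + 1),
            (n.choose j : ℂ) * (Real.exp (-t) : ℂ) ^ j *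
              (1 - (Real.exp (-t) : ℂ)) ^ (n - j) * f j := by
  have hintegrand : EqOn
      (fun t : ℝ => ((1 - Real.exp (-t) : ℝ) : ℂ) ^ (β - 1) * (Real.exp (-t) : ℂ) *
          ∑ j ∈ Finset.range (n + 1),
            (n.choose j : ℂ) * (Real.exp (-t) : ℂ) ^ j *
              (1 - (Real.exp (-t) : ℂ)) ^ (n - j) * f j)
      (fun t : ℝ => ∑ j ∈ Finset.range (n + 1), (n.choose j * f j) *
          (((1 - Real.exp (-t) : ℝ) : ℂ) ^ (((n - j : ℕ) + β) - 1) *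
            (Real.exp (-t) : ℂ) ^ ((j : ℂ) + 1)))
      (Ioi 0) := by
    intro t ht
    have hx : ((1 - Real.exp (-t) : ℝ) : ℂ) ≠ 0 :=
      Complex.ofReal_ne_zero.2 (sub_pos.2 (Real.exp_lt_one_iff.2 (neg_neg_of_pos ht))).ne'
    simp only [Finset.mul_sum]
    refine Finset.sum_congr rfl fun j _ => ?_
    rw [add_sub_assoc, Complex.cpow_add _ _ hx, Complex.cpow_natCast, ← Nat.cast_succ,
      Complex.cpow_natCast, pow_succ]
    push_cast
    ring
  rw [setIntegral_congr_fun measurableSet_Ioi hintegrand, integral_finsetSum _ fun j _ =>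
      (integrableOn_one_sub_exp_neg_cpow_mul_exp_neg_cpow (natCast_add_re_pos hβ _)
        (natCast_add_re_pos (z := 1) one_pos j)).const_mul _, Finset.mul_sum, Finset.mul_sum]
  refine Finset.sum_congr rfl fun j hj => ?_
  rw [integral_const_mul, integral_one_sub_exp_neg_cpow_mul_exp_neg_cpow, ← mul_assoc,
    one_div_mul_eq_div, cK_sub_div_cK_add_one hβ (Nat.lt_succ_iff.1 (Finset.mem_range.1 hj))]
  ring
end
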